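/- arXiv:2212.12492 — 10 statements merged into one kernel-verified Lean document; each statement's English description precedes it below -/
import Mathlib

section
/- For the multi-marginal entropic optimal transport problem with star-shaped cost c(x¹,...,xᵐ) = ∑_{i=2}^m w(x¹,xⁱ) and regularization parameter η > 0, the unique minimizer γ̄ of γ ↦ ∑_x c(x)γ_x + η H_{⊗μⁱ}(γ) over Π(μ¹,...,μᵐ) is the measure obtained by gluing the optimal two-marginal regularized plans π̄ⁱ along the common first marginal: γ̄(x¹,...,xᵐ) = μ¹_{x¹} · ∏_{i=2}^m (π̄ⁱ(x¹,xⁱ)/μ¹_{x¹}), where each π̄ⁱ minimizes π ↦ ∑_{x¹,xⁱ} w(x¹,xⁱ)π(x¹,xⁱ) + η H_{μ¹⊗μⁱ}(π) over Π(μ¹,μⁱ). -/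
/-!
The cost of a plan `γ` on `X¹ × ∏ Xⁱ` only sees its `(1,i)`-marginals `πⁱ(γ)`, and the chain
rule for relative entropy splits `H(γ)` into `∑ᵢ H(πⁱ(γ))` plus the relative entropy of `γ`
with respect to the gluing of the `πⁱ(γ)` along `μ¹`. The latter term is nonnegative by Gibbs'
inequality, so the multi-marginal objective of `γ` is at least the sum of the two-marginal
optima; the glued plan `γ̄` has marginals `π̄ⁱ` and a vanishing gluing term, so it attains this
bound. Uniqueness comes from strict convexity of the entropic objective.
-/

open Finset

lemma Real.sub_le_mul_log_div {a b : ℝ} (ha : 0 ≤ a) (hb : 0 ≤ b) (hab : b = 0 → a = 0) :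
    a - b ≤ a * Real.log (a / b) := by
  rcases ha.eq_or_lt with rfl | ha
  · simpa using hb
  have hb : 0 < b := hb.lt_of_ne' fun h => ha.ne' (hab h)
  have := mul_le_mul_of_nonneg_left (Real.one_sub_inv_le_log_of_pos (div_pos ha hb)) ha.le
  rwa [inv_div, mul_sub, mul_one, mul_div_cancel₀ _ ha.ne'] at this

lemma Real.log_div_mul_prod_eq_sum_add {ι : Type*} [Fintype ι] {g a : ℝ} {p q : ι → ℝ}
    (hg : 0 < g) (ha : 0 < a) (hp : ∀ i, 0 < p i) (hq : ∀ i, 0 < q i) :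
    Real.log (g / (a * ∏ i, q i))
      = ∑ i, Real.log (p i / (a * q i)) + Real.log (g / (a * ∏ i, p i / a)) := by
  have hpq : ∀ i, 0 < p i / (a * q i) := fun i => div_pos (hp i) (mul_pos ha (hq i))
  have hpa : 0 < ∏ i, p i / a := prod_pos fun i _ => div_pos (hp i) ha
  rw [← Real.log_prod fun i _ => (hpq i).ne',
    ← Real.log_mul (prod_pos fun i _ => hpq i).ne' (div_pos hg (mul_pos ha hpa)).ne']
  congr 1
  rw [prod_div_distrib, prod_div_distrib, prod_mul_distrib, prod_const]
  have hP : (∏ i, p i) ≠ 0 := (prod_pos fun i _ => hp i).ne'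
  have hQ : (∏ i, q i) ≠ 0 := (prod_pos fun i _ => hq i).ne'
  field_simp

lemma strictConvexOn_mul_add_mul_log_div (c : ℝ) {η m : ℝ} (hη : 0 < η) (hm : 0 < m) :
    StrictConvexOn ℝ (Set.Ici 0) fun t => c * t + η * (t * Real.log (t / m)) := by
  have hEq : Set.EqOn (fun t => η * (t * Real.log t) + (c - η * Real.log m) * t)
      (fun t => c * t + η * (t * Real.log (t / m))) (Set.Ici 0) := by
    intro t (ht : 0 ≤ t)
    rcases ht.eq_or_lt with rfl | ht
    · simp
    · simp only [Real.log_div ht.ne' hm.ne']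
      ring
  refine StrictConvexOn.congr ⟨convex_Ici 0, fun x hx y hy hxy a b ha hb hab => ?_⟩ hEq
  have := mul_lt_mul_of_pos_left (Real.strictConvexOn_mul_log.2 hx hy hxy ha hb hab) hη
  simp only [smul_eq_mul] at this ⊢
  linarith

lemma strictConvexOn_pi_sum_apply {S : Type*} [Fintype S] {s : Set ℝ} {f : S → ℝ → ℝ}
    (hf : ∀ x, StrictConvexOn ℝ s (f x)) :
    StrictConvexOn ℝ (Set.univ.pi fun _ => s) fun γ => ∑ x, f x (γ x) := by
  refine ⟨convex_pi fun x _ => (hf x).1, fun γ hγ ρ hρ hne a b ha hb hab => ?_⟩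
  obtain ⟨x₀, hx₀⟩ := Function.ne_iff.1 hne
  rw [smul_sum, smul_sum, ← sum_add_distrib]
  refine sum_lt_sum (fun x _ => ?_) ⟨x₀, mem_univ _, ?_⟩
  · exact (hf x).convexOn.2 (hγ x trivial) (hρ x trivial) ha.le hb.le hab
  · exact (hf x₀).2 (hγ x₀ trivial) (hρ x₀ trivial) hx₀ ha hb hab

lemma sum_ite_apply_eq_mul_prod_erase {ι : Type*} [Fintype ι] [DecidableEq ι] {X : ι → Type*}
    [∀ i, Fintype (X i)] [∀ i, DecidableEq (X i)] (f : ∀ j, X j → ℝ) (i : ι) (t : X i) :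
    ∑ y : ∀ j, X j, (if y i = t then ∏ j, f j (y j) else 0)
      = f i t * ∏ j ∈ univ.erase i, ∑ s, f j s := by
  have hfilter : ({y | y i = t} : Finset (∀ j, X j))
      = Fintype.piFinset (Function.update (fun j => (univ : Finset (X j))) i {t}) := by
    rw [Fintype.piFinset_update_singleton_eq_filter_piFinset_eq _ i (mem_univ t),
      Fintype.piFinset_univ]
  rw [← sum_filter, hfilter, ← prod_univ_sum, ← mul_prod_erase _ _ (mem_univ i)]
  congr 1
  · simp
  · exact prod_congr rfl fun j hj => by rw [Function.update_of_ne (ne_of_mem_erase hj)]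

namespace EntropicOT

section Entropy

variable {S : Type*} [Fintype S]

noncomputable def relEntropy (γ m : S → ℝ) : ℝ := ∑ x, γ x * Real.log (γ x / m x)

noncomputable def entropicCost (c : S → ℝ) (η : ℝ) (m γ : S → ℝ) : ℝ :=
  ∑ x, c x * γ x + η * relEntropy γ m

lemma relEntropy_nonneg {γ m : S → ℝ} (hγ : ∀ x, 0 ≤ γ x) (hm : ∀ x, 0 ≤ m x)
    (habs : ∀ x, m x = 0 → γ x = 0) (hsum : ∑ x, γ x = ∑ x, m x) : 0 ≤ relEntropy γ m :=
  calc 0 = ∑ x, (γ x - m x) := by rw [sum_sub_distrib, hsum, sub_self]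
    _ ≤ relEntropy γ m := sum_le_sum fun x _ => Real.sub_le_mul_log_div (hγ x) (hm x) (habs x)

lemma relEntropy_self (γ : S → ℝ) : relEntropy γ γ = 0 :=
  sum_eq_zero fun x _ => by by_cases h : γ x = 0 <;> simp [h]

lemma strictConvexOn_entropicCost (c : S → ℝ) {η : ℝ} {m : S → ℝ} (hη : 0 < η)
    (hm : ∀ x, 0 < m x) :
    StrictConvexOn ℝ (Set.univ.pi fun _ => Set.Ici 0) (entropicCost c η m) := by
  have hsum : entropicCost c η m
      = fun γ => ∑ x, (c x * γ x + η * (γ x * Real.log (γ x / m x))) := by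
    ext γ
    rw [entropicCost, relEntropy, mul_sum, sum_add_distrib]
  rw [hsum]
  exact strictConvexOn_pi_sum_apply fun x => strictConvexOn_mul_add_mul_log_div (c x) hη (hm x)

end Entropy

def couplings {A B : Type*} [Fintype A] [Fintype B] (μ₁ : A → ℝ) (μ₂ : B → ℝ) :
    Set (A × B → ℝ) :=
  {π | (∀ p, 0 ≤ π p) ∧ (∀ z, ∑ y, π (z, y) = μ₁ z) ∧ ∀ y, ∑ z, π (z, y) = μ₂ y}

section Star

variable {X1 ι : Type*} [Fintype ι] {X : ι → Type*}

def starCost (w : ∀ i, X1 → X i → ℝ) (x : X1 × ∀ i, X i) : ℝ := ∑ i, w i x.1 (x.2 i)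

noncomputable def glue (μ1 : X1 → ℝ) (π : ∀ i, X1 × X i → ℝ) (x : X1 × ∀ i, X i) : ℝ :=
  μ1 x.1 * ∏ i, (π i (x.1, x.2 i) / μ1 x.1)

lemma glue_nonneg {μ1 : X1 → ℝ} {π : ∀ i, X1 × X i → ℝ} (hμ1 : ∀ z, 0 < μ1 z)
    (hπ : ∀ i p, 0 ≤ π i p) (x : X1 × ∀ i, X i) : 0 ≤ glue μ1 π x :=
  mul_nonneg (hμ1 x.1).le (prod_nonneg fun i _ => div_nonneg (hπ i _) (hμ1 x.1).le)

variable [DecidableEq ι] [∀ i, Fintype (X i)]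

lemma sum_glue_fst {μ1 : X1 → ℝ} {π : ∀ i, X1 × X i → ℝ} (hμ1 : ∀ z, 0 < μ1 z)
    (hπ : ∀ i z, ∑ t, π i (z, t) = μ1 z) (z : X1) : ∑ y, glue μ1 π (z, y) = μ1 z := by
  simp only [glue]
  rw [← mul_sum, ← Fintype.prod_sum fun i t => π i (z, t) / μ1 z]
  simp [← sum_div, hπ, (hμ1 z).ne']

variable [∀ i, DecidableEq (X i)]

def starCouplings [Fintype X1] (μ1 : X1 → ℝ) (μ : ∀ i, X i → ℝ) : Set (X1 × (∀ i, X i) → ℝ) :=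
  {γ | (∀ x, 0 ≤ γ x) ∧ (∀ z, ∑ y, γ (z, y) = μ1 z) ∧
    ∀ i t, (∑ x : X1 × (∀ j, X j), if x.2 i = t then γ x else 0) = μ i t}

noncomputable def pairMarginal (γ : X1 × (∀ j, X j) → ℝ) (i : ι) (p : X1 × X i) : ℝ :=
  ∑ y : ∀ j, X j, if y i = p.2 then γ (p.1, y) else 0

lemma pairMarginal_nonneg {γ : X1 × (∀ j, X j) → ℝ} (hγ : ∀ x, 0 ≤ γ x) (i : ι)
    (p : X1 × X i) : 0 ≤ pairMarginal γ i p :=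
  sum_nonneg fun _ _ => ite_nonneg (hγ _) le_rfl

lemma apply_le_pairMarginal {γ : X1 × (∀ j, X j) → ℝ} (hγ : ∀ x, 0 ≤ γ x) (i : ι)
    (x : X1 × ∀ j, X j) : γ x ≤ pairMarginal γ i (x.1, x.2 i) := by
  have := single_le_sum (f := fun y : ∀ j, X j => if y i = x.2 i then γ (x.1, y) else 0)
    (fun _ _ => ite_nonneg (hγ _) le_rfl) (mem_univ x.2)
  simpa [pairMarginal] using this

lemma sum_pairMarginal_fst (γ : X1 × (∀ j, X j) → ℝ) (i : ι) (z : X1) :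
    ∑ t, pairMarginal γ i (z, t) = ∑ y, γ (z, y) := by
  simp only [pairMarginal]
  rw [sum_comm]
  simp

lemma pairMarginal_glue {μ1 : X1 → ℝ} {π : ∀ i, X1 × X i → ℝ} (hμ1 : ∀ z, 0 < μ1 z)
    (hπ : ∀ i z, ∑ t, π i (z, t) = μ1 z) : pairMarginal (glue μ1 π) = π := by
  ext i ⟨z, t⟩
  simp only [pairMarginal, glue, ← mul_ite_zero, ← mul_sum]
  rw [sum_ite_apply_eq_mul_prod_erase fun j s => π j (z, s) / μ1 z]
  simp [← sum_div, hπ, (hμ1 z).ne', mul_div_cancel₀]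

variable [Fintype X1]

lemma sum_pairMarginal_snd (γ : X1 × (∀ j, X j) → ℝ) (i : ι) (t : X i) :
    ∑ z, pairMarginal γ i (z, t) = ∑ x : X1 × (∀ j, X j), if x.2 i = t then γ x else 0 := by
  rw [Fintype.sum_prod_type]
  rfl

lemma sum_mul_pairMarginal (γ : X1 × (∀ j, X j) → ℝ) (i : ι) (h : X1 → X i → ℝ) :
    ∑ x, h x.1 (x.2 i) * γ x = ∑ p, h p.1 p.2 * pairMarginal γ i p := by
  rw [Fintype.sum_prod_type, Fintype.sum_prod_type]
  refine sum_congr rfl fun z _ => ?_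
  simp only [pairMarginal, mul_sum]
  rw [sum_comm]
  exact sum_congr rfl fun y _ => by simp [mul_ite]

variable {μ1 : X1 → ℝ} {μ : ∀ i, X i → ℝ}

lemma pairMarginal_mem_couplings {γ : X1 × (∀ j, X j) → ℝ} (hγ : γ ∈ starCouplings μ1 μ)
    (i : ι) : pairMarginal γ i ∈ couplings μ1 (μ i) :=
  ⟨pairMarginal_nonneg hγ.1 i, fun z => (sum_pairMarginal_fst γ i z).trans (hγ.2.1 z),
    fun t => (sum_pairMarginal_snd γ i t).trans (hγ.2.2 i t)⟩

lemma glue_mem_starCouplings {π : ∀ i, X1 × X i → ℝ} (hμ1 : ∀ z, 0 < μ1 z)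
    (hπ : ∀ i, π i ∈ couplings μ1 (μ i)) : glue μ1 π ∈ starCouplings μ1 μ := by
  have hfst : ∀ i z, ∑ t, π i (z, t) = μ1 z := fun i => (hπ i).2.1
  refine ⟨glue_nonneg hμ1 fun i => (hπ i).1, sum_glue_fst hμ1 hfst, fun i t => ?_⟩
  rw [← sum_pairMarginal_snd, pairMarginal_glue hμ1 hfst]
  exact (hπ i).2.2 t

lemma convex_starCouplings (μ1 : X1 → ℝ) (μ : ∀ i, X i → ℝ) :
    Convex ℝ (starCouplings μ1 μ) := by
  intro γ hγ ρ hρ a b ha hb hab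
  have hite : ∀ i t (x : X1 × ∀ j, X j), (if x.2 i = t then (a • γ + b • ρ) x else 0)
      = a * (if x.2 i = t then γ x else 0) + b * (if x.2 i = t then ρ x else 0) := by
    intro i t x
    split_ifs <;> simp
  refine ⟨fun x => ?_, fun z => ?_, fun i t => ?_⟩
  · exact add_nonneg (mul_nonneg ha (hγ.1 x)) (mul_nonneg hb (hρ.1 x))
  · simp only [Pi.add_apply, Pi.smul_apply, smul_eq_mul, sum_add_distrib, ← mul_sum, hγ.2.1,
      hρ.2.1, ← add_mul, hab, one_mul]
  · simp only [hite, sum_add_distrib, ← mul_sum, hγ.2.2, hρ.2.2, ← add_mul, hab, one_mul]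

lemma sum_starCost_mul (w : ∀ i, X1 → X i → ℝ) (γ : X1 × (∀ j, X j) → ℝ) :
    ∑ x, starCost w x * γ x = ∑ i, ∑ p, w i p.1 p.2 * pairMarginal γ i p := by
  simp only [starCost, sum_mul]
  rw [sum_comm]
  exact sum_congr rfl fun i _ => sum_mul_pairMarginal γ i (w i)

lemma relEntropy_eq_sum_add_relEntropy_glue {γ : X1 × (∀ j, X j) → ℝ}
    (hμ1 : ∀ z, 0 < μ1 z) (hμ : ∀ i t, 0 < μ i t) (hγ : ∀ x, 0 ≤ γ x) :
    relEntropy γ (fun x => μ1 x.1 * ∏ i, μ i (x.2 i))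
      = ∑ i, relEntropy (pairMarginal γ i) (fun p => μ1 p.1 * μ i p.2)
        + relEntropy γ (glue μ1 (pairMarginal γ)) := by
  have hpt : ∀ x, γ x * Real.log (γ x / (μ1 x.1 * ∏ i, μ i (x.2 i)))
      = ∑ i, Real.log (pairMarginal γ i (x.1, x.2 i) / (μ1 x.1 * μ i (x.2 i))) * γ x
        + γ x * Real.log (γ x / glue μ1 (pairMarginal γ) x) := by
    intro x
    rcases (hγ x).eq_or_lt with h | h
    · simp [← h]
    rw [Real.log_div_mul_prod_eq_sum_add h (hμ1 x.1)
      (fun i => h.trans_le (apply_le_pairMarginal hγ i x)) (fun i => hμ i _), mul_add, mul_sum]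
    congr 1
    exact sum_congr rfl fun i _ => mul_comm _ _
  simp only [relEntropy, hpt, sum_add_distrib]
  rw [sum_comm]
  congr 1
  refine sum_congr rfl fun i _ => ?_
  rw [sum_mul_pairMarginal γ i fun z t => Real.log (pairMarginal γ i (z, t) / (μ1 z * μ i t))]
  exact sum_congr rfl fun p _ => mul_comm _ _

lemma entropicCost_starCost_eq {γ : X1 × (∀ j, X j) → ℝ} (hμ1 : ∀ z, 0 < μ1 z)
    (hμ : ∀ i t, 0 < μ i t) (hγ : ∀ x, 0 ≤ γ x) (w : ∀ i, X1 → X i → ℝ) (η : ℝ) :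
    entropicCost (starCost w) η (fun x => μ1 x.1 * ∏ i, μ i (x.2 i)) γ
      = ∑ i, entropicCost (fun p => w i p.1 p.2) η (fun p => μ1 p.1 * μ i p.2) (pairMarginal γ i)
        + η * relEntropy γ (glue μ1 (pairMarginal γ)) := by
  rw [entropicCost, sum_starCost_mul, relEntropy_eq_sum_add_relEntropy_glue hμ1 hμ hγ]
  simp only [entropicCost, sum_add_distrib, mul_add, mul_sum]
  ring

lemma relEntropy_glue_pairMarginal_nonneg {γ : X1 × (∀ j, X j) → ℝ} (hμ1 : ∀ z, 0 < μ1 z)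
    (hγ : γ ∈ starCouplings μ1 μ) : 0 ≤ relEntropy γ (glue μ1 (pairMarginal γ)) := by
  have hπ := pairMarginal_mem_couplings hγ
  refine relEntropy_nonneg hγ.1 (glue_nonneg hμ1 fun i => (hπ i).1) (fun x hx => ?_) ?_
  · by_contra hne
    have hpos : 0 < γ x := (hγ.1 x).lt_of_ne' hne
    refine (mul_pos (hμ1 x.1) (prod_pos fun i _ => div_pos ?_ (hμ1 x.1))).ne' hx
    exact hpos.trans_le (apply_le_pairMarginal hγ.1 i x)
  · rw [Fintype.sum_prod_type, Fintype.sum_prod_type]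
    exact sum_congr rfl fun z _ => by rw [hγ.2.1, sum_glue_fst hμ1 fun i => (hπ i).2.1]

theorem isMinOn_entropicCost_glue {π : ∀ i, X1 × X i → ℝ} {w : ∀ i, X1 → X i → ℝ} {η : ℝ}
    (hμ1 : ∀ z, 0 < μ1 z) (hμ : ∀ i t, 0 < μ i t) (hη : 0 ≤ η)
    (hπ : ∀ i, π i ∈ couplings μ1 (μ i))
    (hmin : ∀ i, IsMinOn (entropicCost (fun p => w i p.1 p.2) η (fun p => μ1 p.1 * μ i p.2))
      (couplings μ1 (μ i)) (π i)) :
    IsMinOn (entropicCost (starCost w) η fun x => μ1 x.1 * ∏ i, μ i (x.2 i))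
      (starCouplings μ1 μ) (glue μ1 π) := by
  refine isMinOn_iff.2 fun γ hγ => ?_
  rw [entropicCost_starCost_eq hμ1 hμ (glue_mem_starCouplings hμ1 hπ).1,
    entropicCost_starCost_eq hμ1 hμ hγ.1, pairMarginal_glue hμ1 fun i => (hπ i).2.1,
    relEntropy_self, mul_zero, add_zero]
  exact le_add_of_le_of_nonneg
    (sum_le_sum fun i _ => isMinOn_iff.1 (hmin i) _ (pairMarginal_mem_couplings hγ i))
    (mul_nonneg hη (relEntropy_glue_pairMarginal_nonneg hμ1 hγ))

end Star

end EntropicOT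

open EntropicOT

theorem stmt_4_general {X1 : Type*} {ι : Type*} [Fintype X1] [Fintype ι] [DecidableEq ι]
    {X : ι → Type*} [∀ i, Fintype (X i)] [∀ i, DecidableEq (X i)]
    (μ1 : X1 → ℝ) (μ : ∀ i, X i → ℝ)
    (hμ1 : ∀ z, 0 < μ1 z) (hμ : ∀ i y, 0 < μ i y)
    (w : ∀ i, X1 → X i → ℝ) (η : ℝ) (hη : 0 < η)
    (πb : ∀ i, X1 × X i → ℝ)
    (hπ0 : ∀ i p, 0 ≤ πb i p)
    (hπm1 : ∀ i z, ∑ y, πb i (z, y) = μ1 z)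
    (hπm2 : ∀ i y, ∑ z, πb i (z, y) = μ i y)
    (hπopt : ∀ i (π : X1 × X i → ℝ), (∀ p, 0 ≤ π p) →
      (∀ z, ∑ y, π (z, y) = μ1 z) → (∀ y, ∑ z, π (z, y) = μ i y) →
      (∑ p, w i p.1 p.2 * πb i p
          + η * ∑ p, πb i p * Real.log (πb i p / (μ1 p.1 * μ i p.2)))
        ≤ ∑ p, w i p.1 p.2 * π p
          + η * ∑ p, π p * Real.log (π p / (μ1 p.1 * μ i p.2)))
    (γb : X1 × (∀ i, X i) → ℝ)
    (hγb : ∀ x, γb x = μ1 x.1 * ∏ i, (πb i (x.1, x.2 i) / μ1 x.1)) :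
    ((∀ x, 0 ≤ γb x) ∧ (∀ z, ∑ y, γb (z, y) = μ1 z) ∧
      (∀ i yi, (∑ x : X1 × (∀ j, X j), if x.2 i = yi then γb x else 0) = μ i yi)) ∧
    ∀ γ : X1 × (∀ i, X i) → ℝ, (∀ x, 0 ≤ γ x) →
      (∀ z, ∑ y, γ (z, y) = μ1 z) →
      (∀ i yi, (∑ x : X1 × (∀ j, X j), if x.2 i = yi then γ x else 0) = μ i yi) →
      ((∑ x, (∑ i, w i x.1 (x.2 i)) * γb x
          + η * ∑ x, γb x * Real.log (γb x / (μ1 x.1 * ∏ i, μ i (x.2 i))))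
        ≤ (∑ x, (∑ i, w i x.1 (x.2 i)) * γ x
          + η * ∑ x, γ x * Real.log (γ x / (μ1 x.1 * ∏ i, μ i (x.2 i))))
        ∧ ((∑ x, (∑ i, w i x.1 (x.2 i)) * γ x
            + η * ∑ x, γ x * Real.log (γ x / (μ1 x.1 * ∏ i, μ i (x.2 i))))
          = (∑ x, (∑ i, w i x.1 (x.2 i)) * γb x
            + η * ∑ x, γb x * Real.log (γb x / (μ1 x.1 * ∏ i, μ i (x.2 i))))
          → γ = γb)) := by
  obtain rfl : γb = glue μ1 πb := funext hγb
  have hπ : ∀ i, πb i ∈ couplings μ1 (μ i) := fun i => ⟨hπ0 i, hπm1 i, hπm2 i⟩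
  have hmem := glue_mem_starCouplings hμ1 hπ
  have hmin := isMinOn_entropicCost_glue (w := w) hμ1 hμ hη.le hπ fun i =>
    isMinOn_iff.2 fun π hπ' => hπopt i π hπ'.1 hπ'.2.1 hπ'.2.2
  have hm : ∀ x : X1 × ∀ i, X i, 0 < μ1 x.1 * ∏ i, μ i (x.2 i) := fun x =>
    mul_pos (hμ1 x.1) (prod_pos fun i _ => hμ i _)
  have hconv := (strictConvexOn_entropicCost (starCost w) hη hm).subset
    (fun γ hγ x _ => hγ.1 x) (convex_starCouplings μ1 μ)
  refine ⟨hmem, fun γ h0 h1 h2 => ⟨isMinOn_iff.1 hmin γ ⟨h0, h1, h2⟩, fun heq => ?_⟩⟩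
  exact hconv.eq_of_isMinOn (isMinOn_iff.2 fun ρ hρ => heq.le.trans (isMinOn_iff.1 hmin ρ hρ))
    hmin ⟨h0, h1, h2⟩ hmem

/-- For the star-shaped cost `c(x¹,...,xᵐ) = ∑_{i≥2} w(x¹,xⁱ)` and `η > 0`, the unique
minimizer of the entropic multi-marginal problem over `Π(μ¹,...,μᵐ)` is the gluing of the
optimal two-marginal entropic plans `π̄ⁱ` along the common first marginal `μ¹`. -/
theorem stmt_4 {X1 : Type*} {ι : Type*} [Fintype X1] [DecidableEq X1]
    [Fintype ι] [DecidableEq ι]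
    {X : ι → Type*} [∀ i, Fintype (X i)] [∀ i, DecidableEq (X i)]
    (μ1 : X1 → ℝ) (μ : ∀ i, X i → ℝ)
    (hμ1 : ∀ z, 0 < μ1 z) (hμ1s : ∑ z, μ1 z = 1)
    (hμ : ∀ i y, 0 < μ i y) (hμs : ∀ i, ∑ y, μ i y = 1)
    (w : ∀ i, X1 → X i → ℝ) (η : ℝ) (hη : 0 < η)
    (πb : ∀ i, X1 × X i → ℝ)
    (hπ0 : ∀ i p, 0 ≤ πb i p)
    (hπm1 : ∀ i z, ∑ y, πb i (z, y) = μ1 z)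
    (hπm2 : ∀ i y, ∑ z, πb i (z, y) = μ i y)
    (hπopt : ∀ i (π : X1 × X i → ℝ), (∀ p, 0 ≤ π p) →
      (∀ z, ∑ y, π (z, y) = μ1 z) → (∀ y, ∑ z, π (z, y) = μ i y) →
      (∑ p, w i p.1 p.2 * πb i p
          + η * ∑ p, πb i p * Real.log (πb i p / (μ1 p.1 * μ i p.2)))
        ≤ ∑ p, w i p.1 p.2 * π p
          + η * ∑ p, π p * Real.log (π p / (μ1 p.1 * μ i p.2)))
    (γb : X1 × (∀ i, X i) → ℝ)
    (hγb : ∀ x, γb x = μ1 x.1 * ∏ i, (πb i (x.1, x.2 i) / μ1 x.1)) :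
    ((∀ x, 0 ≤ γb x) ∧ (∀ z, ∑ y, γb (z, y) = μ1 z) ∧
      (∀ i yi, (∑ x : X1 × (∀ j, X j), if x.2 i = yi then γb x else 0) = μ i yi)) ∧
    ∀ γ : X1 × (∀ i, X i) → ℝ, (∀ x, 0 ≤ γ x) →
      (∀ z, ∑ y, γ (z, y) = μ1 z) →
      (∀ i yi, (∑ x : X1 × (∀ j, X j), if x.2 i = yi then γ x else 0) = μ i yi) →
      ((∑ x, (∑ i, w i x.1 (x.2 i)) * γb x
          + η * ∑ x, γb x * Real.log (γb x / (μ1 x.1 * ∏ i, μ i (x.2 i))))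
        ≤ (∑ x, (∑ i, w i x.1 (x.2 i)) * γ x
          + η * ∑ x, γ x * Real.log (γ x / (μ1 x.1 * ∏ i, μ i (x.2 i))))
        ∧ ((∑ x, (∑ i, w i x.1 (x.2 i)) * γ x
            + η * ∑ x, γ x * Real.log (γ x / (μ1 x.1 * ∏ i, μ i (x.2 i))))
          = (∑ x, (∑ i, w i x.1 (x.2 i)) * γb x
            + η * ∑ x, γb x * Real.log (γb x / (μ1 x.1 * ∏ i, μ i (x.2 i))))
          → γ = γb)) :=
  stmt_4_general μ1 μ hμ1 hμ w η hη πb hπ0 hπm1 hπm2 hπopt γb hγb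
end

section
/- The entropic transport cost of a glued coupling splits: if γ(x¹,...,xᵐ) = μ¹_{x¹}∏_{i=2}^m (πⁱ(x¹,xⁱ)/μ¹_{x¹}) where πⁱ ∈ Π(μ¹,μⁱ), then ∑_x (∑_{i=2}^m w(x¹,xⁱ)) γ_x + η H_{⊗_{i=1}^m μⁱ}(γ) = ∑_{i=2}^m [∑_{x¹,xⁱ} w(x¹,xⁱ)πⁱ(x¹,xⁱ) + η H_{μ¹⊗μⁱ}(πⁱ)]. -/
/-!
Under the glued coupling the coordinates `x i` are conditionally independent given `x1`, with
conditional laws `π i (x1, ·) / μ1 x1`. Summing out all coordinates but `x1` and `x i` therefore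
recovers `π i`, so the linear cost splits. The density of the glued coupling against
`μ1 ⊗ ⨂ μ i` is the product of the densities of the `π i` against `μ1 ⊗ μ i`; its logarithm is a
sum, and each summand again only sees the `(x1, x i)`-marginal.
-/

open Finset

theorem Fintype.sum_mul_prod_eq_of_sum_eq_one {R ι : Type*} [CommSemiring R] [Fintype ι]
    [DecidableEq ι] {X : ι → Type*} [∀ i, Fintype (X i)] (K : ∀ i, X i → R)
    (hK : ∀ i, ∑ y, K i y = 1) (i : ι) (F : X i → R) :
    ∑ g : ∀ j, X j, F (g i) * ∏ j, K j (g j) = ∑ y, F y * K i y := by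
  let Φ : X i × (∀ j : {j // j ≠ i}, X j) → R :=
    fun p => F p.1 * K i p.1 * ∏ j : {j // j ≠ i}, K j (p.2 j)
  calc ∑ g : ∀ j, X j, F (g i) * ∏ j, K j (g j)
      = ∑ g, Φ (Equiv.piSplitAt i X g) := by
        refine Finset.sum_congr rfl fun g _ => ?_
        simp only [Φ, Equiv.piSplitAt_apply, mul_assoc,
          Fintype.prod_eq_mul_prod_subtype_ne (fun j => K j (g j)) i]
    _ = ∑ y, F y * K i y := by
        rw [Equiv.sum_comp, Fintype.sum_prod_type]
        simp only [Φ, ← mul_sum, ← Fintype.prod_sum, hK, prod_const_one, mul_one]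

theorem Real.mul_log_prod {ι : Type*} (s : Finset ι) (t : ℝ) (r : ι → ℝ)
    (h : ∀ i ∈ s, r i = 0 → t = 0) :
    t * Real.log (∏ i ∈ s, r i) = ∑ i ∈ s, t * Real.log (r i) := by
  by_cases ht : t = 0
  · simp [ht]
  · rw [Real.log_prod fun i hi hr => ht (h i hi hr), mul_sum]

section Glue

variable {X1 ι : Type*} [Fintype ι] {X : ι → Type*}

noncomputable def glue (μ1 : X1 → ℝ) (π : ∀ i, X1 × X i → ℝ) (x : X1 × ∀ i, X i) : ℝ :=
  μ1 x.1 * ∏ i, (π i (x.1, x.2 i) / μ1 x.1)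

theorem glue_div_prod {μ1 : X1 → ℝ} (π : ∀ i, X1 × X i → ℝ) (μ : ∀ i, X i → ℝ)
    (x : X1 × ∀ i, X i) (hx : μ1 x.1 ≠ 0) :
    glue μ1 π x / (μ1 x.1 * ∏ i, μ i (x.2 i))
      = ∏ i, π i (x.1, x.2 i) / (μ1 x.1 * μ i (x.2 i)) := by
  simp only [glue, prod_div_distrib, prod_mul_distrib, prod_const]
  field_simp

theorem glue_mul_log_div {μ1 : X1 → ℝ} {μ : ∀ i, X i → ℝ} (π : ∀ i, X1 × X i → ℝ)
    (hμ1 : ∀ z, μ1 z ≠ 0) (hμ : ∀ i y, μ i y ≠ 0) (x : X1 × ∀ i, X i) :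
    glue μ1 π x * Real.log (glue μ1 π x / (μ1 x.1 * ∏ i, μ i (x.2 i)))
      = ∑ i, Real.log (π i (x.1, x.2 i) / (μ1 x.1 * μ i (x.2 i))) * glue μ1 π x := by
  rw [glue_div_prod π μ x (hμ1 x.1), Real.mul_log_prod]
  · simp only [mul_comm]
  · intro i _ hi
    have hπ : π i (x.1, x.2 i) = 0 :=
      (div_eq_zero_iff.mp hi).resolve_right (mul_ne_zero (hμ1 _) (hμ _ _))
    rw [glue, prod_eq_zero (mem_univ i) (by rw [hπ, zero_div]), mul_zero]

variable [Fintype X1] [DecidableEq ι] [∀ i, Fintype (X i)]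

theorem sum_mul_glue {μ1 : X1 → ℝ} {π : ∀ i, X1 × X i → ℝ} (hμ1 : ∀ z, μ1 z ≠ 0)
    (hπ : ∀ i z, ∑ y, π i (z, y) = μ1 z) (i : ι) (F : X1 → X i → ℝ) :
    ∑ x, F x.1 (x.2 i) * glue μ1 π x = ∑ p, F p.1 p.2 * π i p := by
  rw [Fintype.sum_prod_type, Fintype.sum_prod_type]
  refine Finset.sum_congr rfl fun z _ => ?_
  have hK : ∀ j, ∑ y, π j (z, y) / μ1 z = 1 := fun j => by
    rw [← sum_div, hπ, div_self (hμ1 z)]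
  calc ∑ g : ∀ j, X j, F z (g i) * glue μ1 π (z, g)
      = μ1 z * ∑ g : ∀ j, X j, F z (g i) * ∏ j, (π j (z, g j) / μ1 z) := by
        rw [mul_sum]
        exact Finset.sum_congr rfl fun g _ => mul_left_comm _ _ _
    _ = ∑ y, F z y * π i (z, y) := by
        rw [Fintype.sum_mul_prod_eq_of_sum_eq_one _ hK i (F z), mul_sum]
        exact Finset.sum_congr rfl fun y _ => by field_simp [hμ1 z]

theorem sum_glue_mul_log_div {μ1 : X1 → ℝ} {μ : ∀ i, X i → ℝ} {π : ∀ i, X1 × X i → ℝ}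
    (hμ1 : ∀ z, μ1 z ≠ 0) (hμ : ∀ i y, μ i y ≠ 0) (hπ : ∀ i z, ∑ y, π i (z, y) = μ1 z) :
    ∑ x, glue μ1 π x * Real.log (glue μ1 π x / (μ1 x.1 * ∏ i, μ i (x.2 i)))
      = ∑ i, ∑ p, π i p * Real.log (π i p / (μ1 p.1 * μ i p.2)) := by
  simp only [glue_mul_log_div π hμ1 hμ]
  rw [sum_comm]
  refine Finset.sum_congr rfl fun i _ => ?_
  rw [sum_mul_glue hμ1 hπ i fun z y => Real.log (π i (z, y) / (μ1 z * μ i y))]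
  simp only [mul_comm]

end Glue

theorem stmt_5_general {X1 : Type*} {ι : Type*} [Fintype X1]
    [Fintype ι] [DecidableEq ι]
    {X : ι → Type*} [∀ i, Fintype (X i)]
    (μ1 : X1 → ℝ) (μ : ∀ i, X i → ℝ)
    (hμ1 : ∀ z, 0 < μ1 z)
    (hμ : ∀ i y, 0 < μ i y)
    (w : ∀ i, X1 → X i → ℝ) (η : ℝ)
    (π : ∀ i, X1 × X i → ℝ)
    (hπm1 : ∀ i z, ∑ y, π i (z, y) = μ1 z)
    (γ : X1 × (∀ i, X i) → ℝ)
    (hγ : ∀ x, γ x = μ1 x.1 * ∏ i, (π i (x.1, x.2 i) / μ1 x.1)) :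
    ∑ x, (∑ i, w i x.1 (x.2 i)) * γ x
        + η * ∑ x, γ x * Real.log (γ x / (μ1 x.1 * ∏ i, μ i (x.2 i)))
      = ∑ i, (∑ p, w i p.1 p.2 * π i p
          + η * ∑ p, π i p * Real.log (π i p / (μ1 p.1 * μ i p.2))) := by
  obtain rfl : γ = glue μ1 π := funext hγ
  have hμ1ne : ∀ z, μ1 z ≠ 0 := fun z => (hμ1 z).ne'
  have hcost : ∑ x, (∑ i, w i x.1 (x.2 i)) * glue μ1 π x = ∑ i, ∑ p, w i p.1 p.2 * π i p := by
    simp only [sum_mul]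
    rw [sum_comm]
    exact Finset.sum_congr rfl fun i _ => sum_mul_glue hμ1ne hπm1 i (w i)
  rw [hcost, sum_glue_mul_log_div hμ1ne (fun i y => (hμ i y).ne') hπm1, mul_sum,
    ← sum_add_distrib]

/-- The entropic transport cost of a glued coupling splits into the sum of the
two-marginal entropic costs: if `γ(x¹,...,xᵐ) = μ¹_{x¹} ∏_{i≥2} πⁱ(x¹,xⁱ)/μ¹_{x¹}`
with `πⁱ ∈ Π(μ¹,μⁱ)`, then
`∑_x (∑ᵢ w(x¹,xⁱ)) γ_x + η H_{⊗μⁱ}(γ) = ∑ᵢ [∑ w πⁱ + η H_{μ¹⊗μⁱ}(πⁱ)]`. -/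
theorem stmt_5 {X1 : Type*} {ι : Type*} [Fintype X1] [DecidableEq X1]
    [Fintype ι] [DecidableEq ι]
    {X : ι → Type*} [∀ i, Fintype (X i)] [∀ i, DecidableEq (X i)]
    (μ1 : X1 → ℝ) (μ : ∀ i, X i → ℝ)
    (hμ1 : ∀ z, 0 < μ1 z) (hμ1s : ∑ z, μ1 z = 1)
    (hμ : ∀ i y, 0 < μ i y) (hμs : ∀ i, ∑ y, μ i y = 1)
    (w : ∀ i, X1 → X i → ℝ) (η : ℝ) (hη : 0 < η)
    (π : ∀ i, X1 × X i → ℝ)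
    (hπ0 : ∀ i p, 0 ≤ π i p)
    (hπm1 : ∀ i z, ∑ y, π i (z, y) = μ1 z)
    (hπm2 : ∀ i y, ∑ z, π i (z, y) = μ i y)
    (γ : X1 × (∀ i, X i) → ℝ)
    (hγ : ∀ x, γ x = μ1 x.1 * ∏ i, (π i (x.1, x.2 i) / μ1 x.1)) :
    ∑ x, (∑ i, w i x.1 (x.2 i)) * γ x
        + η * ∑ x, γ x * Real.log (γ x / (μ1 x.1 * ∏ i, μ i (x.2 i)))
      = ∑ i, (∑ p, w i p.1 p.2 * π i p
          + η * ∑ p, π i p * Real.log (π i p / (μ1 p.1 * μ i p.2))) :=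
  stmt_5_general μ1 μ hμ1 hμ w η π hπm1 γ hγ
end

section
/- Lower bound on the star-cost entropic functional: for any γ ∈ Π(μ¹,...,μᵐ) with two-fold marginals πⁱ(x¹,xⁱ) (projections onto coordinates 1 and i), ∑_x (∑_{i=2}^m w(x¹,xⁱ))γ_x + η H_{⊗μⁱ}(γ) ≥ ∑_{i=2}^m [∑ w(x¹,xⁱ)πⁱ(x¹,xⁱ) + η H_{μ¹⊗μⁱ}(πⁱ)], with equality iff for μ¹-a.e. x¹ the conditional distribution γ_{x¹} is the product of the conditionals πⁱ_{x¹}. -/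
/-!
Let `ρ` be the coupling with the same first marginal and the same pair marginals `πⁱ` as `γ`
under which the coordinates `xⁱ` are conditionally independent given `x¹`:
`ρ(x) = μ¹(x¹) ∏ᵢ πⁱ(x¹, xⁱ) / μ¹(x¹)`. The cost term is linear in `γ`, so it only sees the
pair marginals, and the chain rule for relative entropy splits `H_{⊗μⁱ}(γ)` as
`∑ᵢ H_{μ¹⊗μⁱ}(πⁱ) + H_ρ(γ)`. Hence the gap between the two sides is `η H_ρ(γ)`, which is
nonnegative by Gibbs' inequality and vanishes exactly when `γ = ρ`.
-/

open Finset

section Gibbs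

open Real InformationTheory

variable {α : Type*} [Fintype α] {f g : α → ℝ}

lemma mul_log_div_add_sub_eq_mul_klFun {a b : ℝ} (h : b = 0 → a = 0) :
    a * log (a / b) + b - a = b * klFun (a / b) := by
  rcases eq_or_ne b 0 with rfl | hb
  · simp [h rfl]
  · rw [klFun_apply]
    field_simp

lemma sum_mul_log_div_eq_sum_mul_klFun (hfg : ∀ a, g a = 0 → f a = 0)
    (hsum : ∑ a, f a = ∑ a, g a) :
    ∑ a, f a * log (f a / g a) = ∑ a, g a * klFun (f a / g a) := by
  simp_rw [← mul_log_div_add_sub_eq_mul_klFun (hfg _)]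
  rw [sum_sub_distrib, sum_add_distrib, hsum, add_sub_cancel_right]

lemma sum_mul_log_div_nonneg (hf : 0 ≤ f) (hg : 0 ≤ g) (hfg : ∀ a, g a = 0 → f a = 0)
    (hsum : ∑ a, f a = ∑ a, g a) :
    0 ≤ ∑ a, f a * log (f a / g a) := by
  rw [sum_mul_log_div_eq_sum_mul_klFun hfg hsum]
  exact sum_nonneg fun a _ => mul_nonneg (hg a) (klFun_nonneg (div_nonneg (hf a) (hg a)))

lemma sum_mul_log_div_eq_zero_iff (hf : 0 ≤ f) (hg : 0 ≤ g) (hfg : ∀ a, g a = 0 → f a = 0)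
    (hsum : ∑ a, f a = ∑ a, g a) :
    ∑ a, f a * log (f a / g a) = 0 ↔ f = g := by
  rw [sum_mul_log_div_eq_sum_mul_klFun hfg hsum, sum_eq_zero_iff_of_nonneg fun a _ =>
    mul_nonneg (hg a) (klFun_nonneg (div_nonneg (hf a) (hg a)))]
  simp only [mem_univ, true_implies, funext_iff]
  refine forall_congr' fun a => ?_
  rcases (show 0 ≤ g a from hg a).eq_or_lt with hga | hga
  · simp [← hga, hfg a hga.symm]
  · rw [mul_eq_zero, klFun_eq_zero_iff (div_nonneg (hf a) hga.le),
      div_eq_one_iff_eq hga.ne']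
    simp [hga.ne']

end Gibbs

noncomputable section StarCoupling

open Real

variable {X1 ι : Type*} [Fintype ι] [DecidableEq ι] {X : ι → Type*} [∀ i, Fintype (X i)]

def firstMarginal (γ : X1 × (∀ i, X i) → ℝ) (z : X1) : ℝ := ∑ y, γ (z, y)

lemma le_firstMarginal {γ : X1 × (∀ i, X i) → ℝ} (hγ : 0 ≤ γ) (z : X1) (y : ∀ i, X i) :
    γ (z, y) ≤ firstMarginal γ z :=
  single_le_sum (fun y _ => hγ (z, y)) (mem_univ y)

variable [Fintype X1] [DecidableEq X1] [∀ i, DecidableEq (X i)] (γ : X1 × (∀ i, X i) → ℝ)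

def pairMarginal (i : ι) (p : X1 × X i) : ℝ :=
  ∑ x : X1 × (∀ j, X j), if x.1 = p.1 ∧ x.2 i = p.2 then γ x else 0

def condIndepCoupling (x : X1 × (∀ i, X i)) : ℝ :=
  firstMarginal γ x.1 * ∏ i, pairMarginal γ i (x.1, x.2 i) / firstMarginal γ x.1

lemma sum_mul_pairMarginal (i : ι) (f : X1 × X i → ℝ) :
    ∑ p, f p * pairMarginal γ i p = ∑ x, f (x.1, x.2 i) * γ x := by
  simp_rw [pairMarginal, mul_sum, mul_ite, mul_zero]
  rw [sum_comm]
  refine sum_congr rfl fun x _ => ?_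
  rw [Fintype.sum_eq_single (x.1, x.2 i)]
  · simp
  · intro p hp
    rw [if_neg]
    rintro ⟨h1, h2⟩
    exact hp (Prod.ext h1.symm h2.symm)

lemma sum_pairMarginal_mk (i : ι) (z : X1) :
    ∑ y, pairMarginal γ i (z, y) = firstMarginal γ z := by
  unfold pairMarginal firstMarginal
  rw [sum_comm, Fintype.sum_prod_type, Fintype.sum_eq_single z]
  · simp [sum_ite_eq]
  · intro z' hz
    simp [hz]

variable {γ}

lemma pairMarginal_nonneg (hγ : 0 ≤ γ) (i : ι) (p : X1 × X i) : 0 ≤ pairMarginal γ i p :=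
  sum_nonneg fun x _ => by split_ifs <;> first | exact hγ x | rfl

lemma le_pairMarginal (hγ : 0 ≤ γ) (i : ι) (x : X1 × (∀ i, X i)) :
    γ x ≤ pairMarginal γ i (x.1, x.2 i) := by
  have := single_le_sum (f := fun x' => if x'.1 = x.1 ∧ x'.2 i = x.2 i then γ x' else 0)
    (fun x' _ => by split_ifs <;> first | exact hγ x' | rfl) (mem_univ x)
  rwa [if_pos ⟨rfl, rfl⟩] at this

lemma condIndepCoupling_nonneg (hγ : 0 ≤ γ) : 0 ≤ condIndepCoupling γ := fun x =>
  have hm : 0 ≤ firstMarginal γ x.1 := sum_nonneg fun _ _ => hγ _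
  mul_nonneg hm <| prod_nonneg fun i _ => div_nonneg (pairMarginal_nonneg hγ i _) hm

lemma condIndepCoupling_pos (hγ : 0 ≤ γ) {x : X1 × (∀ i, X i)} (hx : 0 < γ x) :
    0 < condIndepCoupling γ x :=
  have hm : 0 < firstMarginal γ x.1 := hx.trans_le (le_firstMarginal hγ x.1 x.2)
  mul_pos hm <| prod_pos fun i _ => div_pos (hx.trans_le (le_pairMarginal hγ i x)) hm

lemma sum_condIndepCoupling : ∑ x, condIndepCoupling γ x = ∑ x, γ x := by
  rw [Fintype.sum_prod_type, Fintype.sum_prod_type]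
  refine sum_congr rfl fun z _ => ?_
  simp only [condIndepCoupling]
  rw [← mul_sum, ← Fintype.prod_sum fun i yi => pairMarginal γ i (z, yi) / firstMarginal γ z]
  simp_rw [← sum_div, sum_pairMarginal_mk]
  rcases eq_or_ne (firstMarginal γ z) 0 with hz | hz
  · rw [hz, zero_mul]
    exact hz.symm
  · simp only [div_self hz, prod_const_one, mul_one]
    rfl

lemma eq_condIndepCoupling_iff (hγ : 0 ≤ γ) :
    γ = condIndepCoupling γ ↔ ∀ z, firstMarginal γ z ≠ 0 → ∀ y,
      γ (z, y) / firstMarginal γ z = ∏ i, pairMarginal γ i (z, y i) / firstMarginal γ z := by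
  refine ⟨fun h z hz y => ?_, fun h => funext fun ⟨z, y⟩ => ?_⟩
  · rw [div_eq_iff hz, congrFun h (z, y), condIndepCoupling, mul_comm]
  · rcases eq_or_ne (firstMarginal γ z) 0 with hz | hz
    · have := le_firstMarginal hγ z y
      rw [condIndepCoupling, hz, zero_mul]
      exact le_antisymm (hz ▸ this) (hγ _)
    · rw [condIndepCoupling, ← h z hz y, mul_div_cancel₀ _ hz]

lemma sum_sum_mul_eq_sum_sum_mul_pairMarginal (w : ∀ i, X1 → X i → ℝ) :
    ∑ x, (∑ i, w i x.1 (x.2 i)) * γ x = ∑ i, ∑ p, w i p.1 p.2 * pairMarginal γ i p := by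
  simp_rw [sum_mul_pairMarginal, sum_mul]
  exact sum_comm

lemma log_div_firstMarginal_mul_prod (hγ : 0 ≤ γ) {μ : ∀ i, X i → ℝ} (hμ : ∀ i y, 0 < μ i y)
    {x : X1 × (∀ i, X i)} (hx : 0 < γ x) :
    log (γ x / (firstMarginal γ x.1 * ∏ i, μ i (x.2 i))) =
      log (γ x / condIndepCoupling γ x) +
        ∑ i, log (pairMarginal γ i (x.1, x.2 i) / (firstMarginal γ x.1 * μ i (x.2 i))) := by
  have hm : 0 < firstMarginal γ x.1 := hx.trans_le (le_firstMarginal hγ x.1 x.2)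
  have hπ i : 0 < pairMarginal γ i (x.1, x.2 i) := hx.trans_le (le_pairMarginal hγ i x)
  have hP : 0 < ∏ i, pairMarginal γ i (x.1, x.2 i) / firstMarginal γ x.1 :=
    prod_pos fun i _ => div_pos (hπ i) hm
  have hQ : 0 < ∏ i, μ i (x.2 i) := prod_pos fun i _ => hμ i _
  have hsplit : ∏ i, pairMarginal γ i (x.1, x.2 i) / (firstMarginal γ x.1 * μ i (x.2 i)) =
      (∏ i, pairMarginal γ i (x.1, x.2 i) / firstMarginal γ x.1) / ∏ i, μ i (x.2 i) := by
    rw [← prod_div_distrib]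
    simp_rw [div_div]
  rw [← log_prod fun i _ => (div_pos (hπ i) (mul_pos hm (hμ i _))).ne', hsplit,
    ← log_mul (div_pos hx (condIndepCoupling_pos hγ hx)).ne' (div_pos hP hQ).ne',
    condIndepCoupling]
  field_simp

lemma sum_mul_log_div_firstMarginal_mul_prod (hγ : 0 ≤ γ) {μ : ∀ i, X i → ℝ}
    (hμ : ∀ i y, 0 < μ i y) :
    ∑ x, γ x * log (γ x / (firstMarginal γ x.1 * ∏ i, μ i (x.2 i))) =
      ∑ i, ∑ p, pairMarginal γ i p * log (pairMarginal γ i p / (firstMarginal γ p.1 * μ i p.2)) +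
        ∑ x, γ x * log (γ x / condIndepCoupling γ x) := by
  simp_rw [mul_comm (pairMarginal γ _ _), sum_mul_pairMarginal]
  rw [sum_comm, ← sum_add_distrib]
  refine sum_congr rfl fun x _ => ?_
  rcases (hγ x).eq_or_lt with hx | hx
  · simp [← hx]
  · rw [log_div_firstMarginal_mul_prod hγ hμ hx, mul_add, mul_sum, add_comm]
    simp_rw [mul_comm (γ x)]

end StarCoupling

theorem stmt_6_general {X1 : Type*} {ι : Type*} [Fintype X1] [DecidableEq X1]
    [Fintype ι] [DecidableEq ι]
    {X : ι → Type*} [∀ i, Fintype (X i)] [∀ i, DecidableEq (X i)]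
    (μ1 : X1 → ℝ) (μ : ∀ i, X i → ℝ)
    (hμ : ∀ i y, 0 < μ i y)
    (w : ∀ i, X1 → X i → ℝ) (η : ℝ) (hη : 0 < η)
    (γ : X1 × (∀ i, X i) → ℝ) (hγ0 : ∀ x, 0 ≤ γ x)
    (hγm1 : ∀ z, ∑ y, γ (z, y) = μ1 z)
    (π : ∀ i, X1 × X i → ℝ)
    (hπ : ∀ i p, π i p =
      ∑ x : X1 × (∀ j, X j), if x.1 = p.1 ∧ x.2 i = p.2 then γ x else 0) :
    (∑ x, (∑ i, w i x.1 (x.2 i)) * γ x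
        + η * ∑ x, γ x * Real.log (γ x / (μ1 x.1 * ∏ i, μ i (x.2 i)))
      ≥ ∑ i, (∑ p, w i p.1 p.2 * π i p
          + η * ∑ p, π i p * Real.log (π i p / (μ1 p.1 * μ i p.2))))
    ∧ ((∑ x, (∑ i, w i x.1 (x.2 i)) * γ x
        + η * ∑ x, γ x * Real.log (γ x / (μ1 x.1 * ∏ i, μ i (x.2 i)))
      = ∑ i, (∑ p, w i p.1 p.2 * π i p
          + η * ∑ p, π i p * Real.log (π i p / (μ1 p.1 * μ i p.2))))
      ↔ ∀ z : X1, μ1 z ≠ 0 → ∀ y : ∀ j, X j,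
          γ (z, y) / μ1 z = ∏ i, (π i (z, y i) / μ1 z)) := by
  obtain rfl : μ1 = firstMarginal γ := funext fun z => (hγm1 z).symm
  obtain rfl : π = pairMarginal γ := funext fun i => funext (hπ i)
  have hγ : 0 ≤ γ := hγ0
  have hργ : ∀ x, condIndepCoupling γ x = 0 → γ x = 0 := fun x hx =>
    (hγ x).eq_or_lt.elim Eq.symm fun h => absurd hx (condIndepCoupling_pos hγ h).ne'
  have hsum := (sum_condIndepCoupling (γ := γ)).symm
  rw [sum_sum_mul_eq_sum_sum_mul_pairMarginal, sum_mul_log_div_firstMarginal_mul_prod hγ hμ,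
    sum_add_distrib, ← mul_sum, ← eq_condIndepCoupling_iff hγ,
    ← sum_mul_log_div_eq_zero_iff hγ (condIndepCoupling_nonneg hγ) hργ hsum]
  have hgap := mul_nonneg hη.le (sum_mul_log_div_nonneg hγ (condIndepCoupling_nonneg hγ) hργ hsum)
  refine ⟨by linarith, fun h => ?_, fun h => by rw [h, add_zero]⟩
  exact (mul_eq_zero.mp (by linarith)).resolve_left hη.ne'

/-- Lower bound for the star-cost entropic functional: for any coupling
`γ ∈ Π(μ¹,...,μᵐ)` with two-fold marginals `πⁱ` (onto coordinates 1 and `i`),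
`∑_x (∑ᵢ w(x¹,xⁱ)) γ_x + η H_{⊗μⁱ}(γ) ≥ ∑ᵢ [∑ w πⁱ + η H_{μ¹⊗μⁱ}(πⁱ)]`,
with equality iff for `μ¹`-a.e. `x¹` the conditional of `γ` given `x¹` is the
product of the conditionals of the `πⁱ`. -/
theorem stmt_6 {X1 : Type*} {ι : Type*} [Fintype X1] [DecidableEq X1]
    [Fintype ι] [DecidableEq ι]
    {X : ι → Type*} [∀ i, Fintype (X i)] [∀ i, DecidableEq (X i)]
    (μ1 : X1 → ℝ) (μ : ∀ i, X i → ℝ)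
    (hμ1 : ∀ z, 0 < μ1 z) (hμ1s : ∑ z, μ1 z = 1)
    (hμ : ∀ i y, 0 < μ i y) (hμs : ∀ i, ∑ y, μ i y = 1)
    (w : ∀ i, X1 → X i → ℝ) (η : ℝ) (hη : 0 < η)
    (γ : X1 × (∀ i, X i) → ℝ) (hγ0 : ∀ x, 0 ≤ γ x)
    (hγm1 : ∀ z, ∑ y, γ (z, y) = μ1 z)
    (hγm : ∀ i yi, (∑ x : X1 × (∀ j, X j), if x.2 i = yi then γ x else 0) = μ i yi)
    (π : ∀ i, X1 × X i → ℝ)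
    (hπ : ∀ i p, π i p =
      ∑ x : X1 × (∀ j, X j), if x.1 = p.1 ∧ x.2 i = p.2 then γ x else 0) :
    (∑ x, (∑ i, w i x.1 (x.2 i)) * γ x
        + η * ∑ x, γ x * Real.log (γ x / (μ1 x.1 * ∏ i, μ i (x.2 i)))
      ≥ ∑ i, (∑ p, w i p.1 p.2 * π i p
          + η * ∑ p, π i p * Real.log (π i p / (μ1 p.1 * μ i p.2))))
    ∧ ((∑ x, (∑ i, w i x.1 (x.2 i)) * γ x
        + η * ∑ x, γ x * Real.log (γ x / (μ1 x.1 * ∏ i, μ i (x.2 i)))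
      = ∑ i, (∑ p, w i p.1 p.2 * π i p
          + η * ∑ p, π i p * Real.log (π i p / (μ1 p.1 * μ i p.2))))
      ↔ ∀ z : X1, μ1 z ≠ 0 → ∀ y : ∀ j, X j,
          γ (z, y) / μ1 z = ∏ i, (π i (z, y i) / μ1 z)) :=
  stmt_6_general μ1 μ hμ w η hη γ hγ0 hγm1 π hπ
end

section
/- Sum of two-marginal Schrödinger potentials solves the multi-marginal regularized dual for the star cost: if for each i = 2,...,m the pair (ψⁱ, φⁱ) satisfies the two-marginal Schrödinger system, i.e. the plan exp((ψⁱ(x¹)+φⁱ(xⁱ)-w(x¹,xⁱ))/η)μ¹_{x¹}μⁱ_{xⁱ} has marginals μ¹ and μⁱ, then, setting φ¹ = ∑_{i=2}^m ψⁱ, the measure exp((∑_{i=1}^m φⁱ(xⁱ) - ∑_{i=2}^m w(x¹,xⁱ))/η) ∏ᵢ μⁱ_{xⁱ} lies in Π(μ¹,...,μᵐ) and is the optimizer of the regularized multi-marginal problem with cost ∑_{i=2}^m w(x¹,xⁱ). -/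
lemma aux_pointwise {η a b m c Φ : ℝ} (hη : 0 < η) (hb : 0 < b) (ha : 0 ≤ a) (hm : 0 < m)
    (hlog : Real.log (b / m) = (Φ - c) / η) :
    Φ * a + η * (a - b) ≤ c * a + η * (a * Real.log (a / m)) := by
  rcases ha.eq_or_lt with h0 | h0
  · rw [← h0]; nlinarith
  · have hL : Real.log (a / m) = Real.log (a / b) + (Φ - c) / η := by
      rw [← hlog, Real.log_div h0.ne' hm.ne', Real.log_div h0.ne' hb.ne',
        Real.log_div hb.ne' hm.ne']
      ring
    rw [hL]
    have h1 : Real.log (b / a) ≤ b / a - 1 := Real.log_le_sub_one_of_pos (div_pos hb h0)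
    have h2 : Real.log (b / a) = - Real.log (a / b) := by
      rw [← Real.log_inv]; congr 1; rw [inv_div]
    have h3 : a - b ≤ a * Real.log (a / b) := by
      rw [h2] at h1
      have h4 := mul_le_mul_of_nonneg_left h1 h0.le
      have h5 : a * (b / a - 1) = b - a := by field_simp
      nlinarith
    have h6 : η * (a * (Real.log (a / b) + (Φ - c) / η))
        = η * (a * Real.log (a / b)) + a * (Φ - c) := by
      field_simp
    rw [h6]
    nlinarith [mul_le_mul_of_nonneg_left h3 hη.le]

/-- If for each `i` the pair `(ψⁱ, φⁱ)` solves the two-marginal Schrödinger system for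
cost `w` between `μ¹` and `μⁱ`, then, with `φ¹ = ∑ᵢ ψⁱ`, the Gibbs measure
`exp((∑ᵢ φⁱ(xⁱ) - ∑ᵢ w(x¹,xⁱ))/η) ⊗ᵢ μⁱ` lies in `Π(μ¹,...,μᵐ)` and minimizes the
regularized multi-marginal problem with star cost `∑ᵢ w(x¹,xⁱ)`. -/
theorem stmt_8 {X1 : Type*} {ι : Type*} [Fintype X1] [DecidableEq X1]
    [Fintype ι] [DecidableEq ι]
    {X : ι → Type*} [∀ i, Fintype (X i)] [∀ i, DecidableEq (X i)]
    (μ1 : X1 → ℝ) (μ : ∀ i, X i → ℝ)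
    (hμ1 : ∀ z, 0 < μ1 z) (hμ1s : ∑ z, μ1 z = 1)
    (hμ : ∀ i y, 0 < μ i y) (hμs : ∀ i, ∑ y, μ i y = 1)
    (w : ∀ i, X1 → X i → ℝ) (η : ℝ) (hη : 0 < η)
    (ψ : ∀ i, X1 → ℝ) (φ : ∀ i, X i → ℝ)
    (hS1 : ∀ i z, ∑ y, Real.exp ((ψ i z + φ i y - w i z y) / η) * μ i y = 1)
    (hS2 : ∀ i y, ∑ z, Real.exp ((ψ i z + φ i y - w i z y) / η) * μ1 z = 1)
    (γ : X1 × (∀ i, X i) → ℝ)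
    (hγ : ∀ x, γ x = Real.exp
        (((∑ i, ψ i x.1) + (∑ i, φ i (x.2 i)) - ∑ i, w i x.1 (x.2 i)) / η)
      * (μ1 x.1 * ∏ i, μ i (x.2 i))) :
    ((∀ x, 0 ≤ γ x) ∧ (∀ z, ∑ y, γ (z, y) = μ1 z) ∧
      (∀ i yi, (∑ x : X1 × (∀ j, X j), if x.2 i = yi then γ x else 0) = μ i yi)) ∧
    ∀ γ' : X1 × (∀ i, X i) → ℝ, (∀ x, 0 ≤ γ' x) →
      (∀ z, ∑ y, γ' (z, y) = μ1 z) →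
      (∀ i yi, (∑ x : X1 × (∀ j, X j), if x.2 i = yi then γ' x else 0) = μ i yi) →
      (∑ x, (∑ i, w i x.1 (x.2 i)) * γ x
          + η * ∑ x, γ x * Real.log (γ x / (μ1 x.1 * ∏ i, μ i (x.2 i))))
        ≤ ∑ x, (∑ i, w i x.1 (x.2 i)) * γ' x
          + η * ∑ x, γ' x * Real.log (γ' x / (μ1 x.1 * ∏ i, μ i (x.2 i))) := by
  classical
  -- factorization of γ
  have hfact : ∀ z y, γ (z, y)
      = μ1 z * ∏ i, Real.exp ((ψ i z + φ i (y i) - w i z (y i)) / η) * μ i (y i) := by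
    intro z y
    have h := hγ (z, y)
    simp only at h
    rw [h, Finset.prod_mul_distrib, ← Real.exp_sum, ← Finset.sum_div,
      Finset.sum_sub_distrib, Finset.sum_add_distrib]
    ring
  have hrowsum : ∀ z,
      (∑ y : ∀ i, X i, ∏ i, Real.exp ((ψ i z + φ i (y i) - w i z (y i)) / η) * μ i (y i)) = 1 := by
    intro z
    calc (∑ y : ∀ i, X i, ∏ i, Real.exp ((ψ i z + φ i (y i) - w i z (y i)) / η) * μ i (y i))
        = ∏ i, ∑ u, Real.exp ((ψ i z + φ i u - w i z u) / η) * μ i u :=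
          (Fintype.prod_sum fun i u => Real.exp ((ψ i z + φ i u - w i z u) / η) * μ i u).symm
      _ = 1 := Finset.prod_eq_one fun i _ => hS1 i z
  have hmarg1 : ∀ z, ∑ y, γ (z, y) = μ1 z := by
    intro z
    calc (∑ y, γ (z, y))
        = ∑ y : ∀ i, X i, μ1 z * ∏ i, Real.exp ((ψ i z + φ i (y i) - w i z (y i)) / η) * μ i (y i) :=
          Finset.sum_congr rfl fun y _ => hfact z y
      _ = μ1 z * ∑ y : ∀ i, X i, ∏ i, Real.exp ((ψ i z + φ i (y i) - w i z (y i)) / η) * μ i (y i) :=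
          (Finset.mul_sum _ _ _).symm
      _ = μ1 z := by rw [hrowsum, mul_one]
  have hmargi : ∀ i yi, (∑ x : X1 × (∀ j, X j), if x.2 i = yi then γ x else 0) = μ i yi := by
    intro i yi
    have hginner : ∀ z, (∑ y : ∀ j, X j, if y i = yi then γ (z, y) else 0)
        = μ1 z * (Real.exp ((ψ i z + φ i yi - w i z yi) / η) * μ i yi) := by
      intro z
      set g : ∀ j, X j → ℝ :=
        Function.update (fun j u => Real.exp ((ψ j z + φ j u - w j z u) / η) * μ j u) i
          (fun u => if u = yi then Real.exp ((ψ i z + φ i u - w i z u) / η) * μ i u else 0)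
        with hg
      have hgne : ∀ j, j ≠ i →
          g j = fun u => Real.exp ((ψ j z + φ j u - w j z u) / η) * μ j u :=
        fun j hj => Function.update_of_ne hj _ _
      have hgi : g i = fun u =>
          if u = yi then Real.exp ((ψ i z + φ i u - w i z u) / η) * μ i u else 0 :=
        Function.update_self _ _ _
      have hstep : ∀ y : ∀ j, X j,
          (if y i = yi then γ (z, y) else 0) = μ1 z * ∏ j, g j (y j) := by
        intro y
        by_cases h : y i = yi
        · rw [if_pos h, hfact z y]
          congr 1
          refine Finset.prod_congr rfl fun j _ => ?_
          by_cases hj : j = i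
          · subst hj; simp [hgi, h]
          · simp [hgne j hj]
        · rw [if_neg h]
          have hz : (∏ j, g j (y j)) = 0 :=
            Finset.prod_eq_zero (Finset.mem_univ i) (by simp [hgi, h])
          rw [hz, mul_zero]
      calc (∑ y : ∀ j, X j, if y i = yi then γ (z, y) else 0)
          = ∑ y : ∀ j, X j, μ1 z * ∏ j, g j (y j) :=
            Finset.sum_congr rfl fun y _ => hstep y
        _ = μ1 z * ∑ y : ∀ j, X j, ∏ j, g j (y j) := (Finset.mul_sum _ _ _).symm
        _ = μ1 z * ∏ j, ∑ u, g j u := by rw [← Fintype.prod_sum]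
        _ = μ1 z * (Real.exp ((ψ i z + φ i yi - w i z yi) / η) * μ i yi) := by
            congr 1
            rw [Finset.prod_eq_single i
              (fun j _ hj => by rw [hgne j hj]; exact hS1 j z)
              (fun h => absurd (Finset.mem_univ i) h)]
            simp [hgi]
    calc (∑ x : X1 × (∀ j, X j), if x.2 i = yi then γ x else 0)
        = ∑ z, ∑ y : ∀ j, X j, if y i = yi then γ (z, y) else 0 := by
          simp [Fintype.sum_prod_type]
      _ = ∑ z, μ1 z * (Real.exp ((ψ i z + φ i yi - w i z yi) / η) * μ i yi) :=
          Finset.sum_congr rfl fun z _ => hginner z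
      _ = (∑ z, Real.exp ((ψ i z + φ i yi - w i z yi) / η) * μ1 z) * μ i yi := by
          rw [Finset.sum_mul]
          exact Finset.sum_congr rfl fun z _ => by ring
      _ = μ i yi := by rw [hS2 i yi, one_mul]
  have hmpos : ∀ x : X1 × (∀ i, X i), 0 < μ1 x.1 * ∏ i, μ i (x.2 i) :=
    fun x => mul_pos (hμ1 _) (Finset.prod_pos fun i _ => hμ i _)
  have hγpos : ∀ x, 0 < γ x := fun x => by
    rw [hγ]; exact mul_pos (Real.exp_pos _) (hmpos x)
  have hlog : ∀ x : X1 × (∀ i, X i),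
      Real.log (γ x / (μ1 x.1 * ∏ i, μ i (x.2 i)))
        = ((∑ i, ψ i x.1) + (∑ i, φ i (x.2 i)) - ∑ i, w i x.1 (x.2 i)) / η := by
    intro x
    rw [hγ, mul_div_assoc, div_self (ne_of_gt (hmpos x)), mul_one, Real.log_exp]
  -- the value ∑ Φ ρ only depends on the marginals
  have hΦsum : ∀ ρ : X1 × (∀ i, X i) → ℝ, (∀ z, ∑ y, ρ (z, y) = μ1 z) →
      (∀ i yi, (∑ x : X1 × (∀ j, X j), if x.2 i = yi then ρ x else 0) = μ i yi) →
      (∑ x : X1 × (∀ i, X i), ((∑ i, ψ i x.1) + ∑ i, φ i (x.2 i)) * ρ x)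
        = (∑ z, (∑ i, ψ i z) * μ1 z) + ∑ i, ∑ yi, φ i yi * μ i yi := by
    intro ρ h1 h2
    simp only [add_mul, Finset.sum_add_distrib]
    congr 1
    · rw [Fintype.sum_prod_type]
      refine Finset.sum_congr rfl fun z _ => ?_
      simp only
      rw [← Finset.mul_sum, h1 z]
    · simp only [Finset.sum_mul]
      rw [Finset.sum_comm]
      refine Finset.sum_congr rfl fun i _ => ?_
      have hx : ∀ x : X1 × (∀ j, X j), φ i (x.2 i) * ρ x
          = ∑ yi, if x.2 i = yi then φ i yi * ρ x else 0 := by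
        intro x
        rw [Finset.sum_ite_eq]
        simp
      calc (∑ x : X1 × (∀ j, X j), φ i (x.2 i) * ρ x)
          = ∑ x : X1 × (∀ j, X j), ∑ yi, if x.2 i = yi then φ i yi * ρ x else 0 :=
            Finset.sum_congr rfl fun x _ => hx x
        _ = ∑ yi, ∑ x : X1 × (∀ j, X j), if x.2 i = yi then φ i yi * ρ x else 0 :=
            Finset.sum_comm
        _ = ∑ yi, φ i yi * ∑ x : X1 × (∀ j, X j), if x.2 i = yi then ρ x else 0 := by
            refine Finset.sum_congr rfl fun yi _ => ?_
            rw [Finset.mul_sum]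
            exact Finset.sum_congr rfl fun x _ => by rw [mul_ite, mul_zero]
        _ = ∑ yi, φ i yi * μ i yi := by
            refine Finset.sum_congr rfl fun yi _ => ?_
            rw [h2 i yi]
  refine ⟨⟨fun x => (hγpos x).le, hmarg1, hmargi⟩, ?_⟩
  intro γ' hpos' h1' h2'
  have hmass : (∑ x : X1 × (∀ i, X i), γ' x) = ∑ x : X1 × (∀ i, X i), γ x := by
    rw [Fintype.sum_prod_type, Fintype.sum_prod_type]
    refine Finset.sum_congr rfl fun z _ => ?_
    rw [h1' z, hmarg1 z]
  calc (∑ x, (∑ i, w i x.1 (x.2 i)) * γ x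
          + η * ∑ x, γ x * Real.log (γ x / (μ1 x.1 * ∏ i, μ i (x.2 i))))
      = ∑ x : X1 × (∀ i, X i), ((∑ i, ψ i x.1) + ∑ i, φ i (x.2 i)) * γ x := by
        rw [Finset.mul_sum, ← Finset.sum_add_distrib]
        refine Finset.sum_congr rfl fun x _ => ?_
        rw [hlog x]
        field_simp
        ring
    _ = ∑ x : X1 × (∀ i, X i), ((∑ i, ψ i x.1) + ∑ i, φ i (x.2 i)) * γ' x := by
        rw [hΦsum γ hmarg1 hmargi, hΦsum γ' h1' h2']
    _ = ∑ x : X1 × (∀ i, X i),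
          (((∑ i, ψ i x.1) + ∑ i, φ i (x.2 i)) * γ' x + η * (γ' x - γ x)) := by
        rw [Finset.sum_add_distrib, ← Finset.mul_sum, Finset.sum_sub_distrib, hmass,
          sub_self, mul_zero, add_zero]
    _ ≤ ∑ x : X1 × (∀ i, X i),
          ((∑ i, w i x.1 (x.2 i)) * γ' x
            + η * (γ' x * Real.log (γ' x / (μ1 x.1 * ∏ i, μ i (x.2 i))))) :=
        Finset.sum_le_sum fun x _ =>
          aux_pointwise hη (hγpos x) (hpos' x) (hmpos x) (hlog x)
    _ = ∑ x, (∑ i, w i x.1 (x.2 i)) * γ' x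
          + η * ∑ x, γ' x * Real.log (γ' x / (μ1 x.1 * ∏ i, μ i (x.2 i))) := by
        rw [Finset.sum_add_distrib, Finset.mul_sum]
end

section
/- Uniform bound on normalized dual potentials: suppose ‖c‖_∞ ≤ M and φ : X → ℝ satisfies the fixed-point relation φ_z = -η log(∑_y ∑_{x̄∈X^{m-2}} exp((∑_{i=3}^m φ_{x̄ⁱ} - c(y,z,x̄))/η) (⊗^{m-2}ρ)_{x̄} ρ̄_y) for all z, where ρ̄_y = ρ_y / ∑_{x̄∈X^{m-1}} exp((∑_{i=2}^m φ_{x̄ⁱ} - c(y,x̄))/η) ρ̃_{x̄}, together with the normalization φ_{x₀} = 0. Then ‖φ‖_∞ ≤ 4M. -/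
/-!
The fixed-point relation writes `φ z` as an entropic soft-minimum, over pairs `(y, x̄)`, of the
reduced costs `c(y, z, x̄) - ∑ φ(x̄ⁱ)` with positive weights that do not depend on `z`. A
soft-minimum is monotone and shifts by `δ` when its argument does; since changing `z` moves every
reduced cost by at most `2M`, `φ` oscillates by at most `2M`, and `φ x₀ = 0` gives
`|φ| ≤ 2M ≤ 4M`.
-/

noncomputable def softmin {ι : Type*} [Fintype ι] (η : ℝ) (w f : ι → ℝ) : ℝ :=
  -η * Real.log (∑ j, Real.exp (-f j / η) * w j)

theorem softmin_le_add_of_le_add {ι : Type*} [Fintype ι] [Nonempty ι] {η δ : ℝ} (hη : 0 < η)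
    {w f g : ι → ℝ} (hw : ∀ j, 0 < w j) (hgf : ∀ j, g j ≤ f j + δ) :
    softmin η w g ≤ softmin η w f + δ := by
  have hpos : 0 < ∑ j, Real.exp (-f j / η) * w j :=
    Finset.sum_pos (fun j _ => mul_pos (Real.exp_pos _) (hw j)) Finset.univ_nonempty
  have hsum : Real.exp (-δ / η) * ∑ j, Real.exp (-f j / η) * w j
      ≤ ∑ j, Real.exp (-g j / η) * w j := by
    rw [Finset.mul_sum]
    refine Finset.sum_le_sum fun j _ => ?_
    rw [← mul_assoc, ← Real.exp_add]
    refine mul_le_mul_of_nonneg_right (Real.exp_le_exp.mpr ?_) (hw j).le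
    rw [← add_div]
    exact div_le_div_of_nonneg_right (by linarith [hgf j]) hη.le
  have hlog := Real.log_le_log (mul_pos (Real.exp_pos _) hpos) hsum
  rw [Real.log_mul (Real.exp_ne_zero _) hpos.ne', Real.log_exp] at hlog
  have := mul_le_mul_of_nonneg_left hlog hη.le
  rw [mul_add, mul_div_cancel₀ _ hη.ne'] at this
  unfold softmin
  linarith

theorem stmt_10_general {X : Type*} [Fintype X] [Nonempty X]
    (ρ : X → ℝ) (hρ : ∀ x, 0 < ρ x)
    (k : ℕ) (c : (Fin (k + 2) → X) → ℝ) (M η : ℝ) (hη : 0 < η)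
    (hc : ∀ xb, |c xb| ≤ M)
    (x0 : X) (φ : X → ℝ) (hφ0 : φ x0 = 0)
    (hfix : ∀ z, φ z = -η * Real.log (∑ y, ∑ xb : Fin k → X,
      Real.exp (((∑ i, φ (xb i)) - c (Fin.cons y (Fin.cons z xb))) / η)
        * (∏ i, ρ (xb i))
        * (ρ y / ∑ xb' : Fin (k + 1) → X,
            Real.exp (((∑ i, φ (xb' i)) - c (Fin.cons y xb')) / η) * ∏ i, ρ (xb' i)))) :
    ∀ z, |φ z| ≤ 4 * M := by
  let T : X → ℝ := fun y => ∑ xb' : Fin (k + 1) → X,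
    Real.exp (((∑ i, φ (xb' i)) - c (Fin.cons y xb')) / η) * ∏ i, ρ (xb' i)
  have hT : ∀ y, 0 < T y := fun y => Finset.sum_pos (fun xb _ =>
    mul_pos (Real.exp_pos _) (Finset.prod_pos fun i _ => hρ _)) Finset.univ_nonempty
  let w : X × (Fin k → X) → ℝ := fun p => (∏ i, ρ (p.2 i)) * (ρ p.1 / T p.1)
  let F : X → X × (Fin k → X) → ℝ := fun z p => c (Fin.cons p.1 (Fin.cons z p.2)) - ∑ i, φ (p.2 i)
  have hw : ∀ p, 0 < w p := fun p =>
    mul_pos (Finset.prod_pos fun i _ => hρ _) (div_pos (hρ _) (hT _))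
  have hφ : ∀ z, φ z = softmin η w (F z) := fun z => by
    rw [hfix z, softmin, Fintype.sum_prod_type]
    simp only [F, w, T, neg_sub, mul_assoc]
  have hF : ∀ z z' p, F z p ≤ F z' p + 2 * M := fun z z' p => by
    linarith [abs_le.mp (hc (Fin.cons p.1 (Fin.cons z p.2))),
      abs_le.mp (hc (Fin.cons p.1 (Fin.cons z' p.2)))]
  have hM : 0 ≤ M := (abs_nonneg _).trans (hc fun _ => x0)
  intro z
  have hup := softmin_le_add_of_le_add hη hw (hF z x0)
  have hlow := softmin_le_add_of_le_add hη hw (hF x0 z)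
  rw [← hφ, ← hφ, hφ0] at hup hlow
  rw [abs_le]
  constructor <;> linarith

/-- Uniform bound on normalized dual potentials: if `‖c‖_∞ ≤ M` and `φ` satisfies the
first-order fixed-point relation of the symmetric regularized dual problem (with `m = k+2`
marginals all equal to `ρ`), normalized by `φ(x₀) = 0`, then `‖φ‖_∞ ≤ 4M`. -/
theorem stmt_10 {X : Type*} [Fintype X] [Nonempty X]
    (ρ : X → ℝ) (hρ : ∀ x, 0 < ρ x) (hρs : ∑ x, ρ x = 1)
    (k : ℕ) (c : (Fin (k + 2) → X) → ℝ) (M η : ℝ) (hη : 0 < η)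
    (hc : ∀ xb, |c xb| ≤ M)
    (x0 : X) (φ : X → ℝ) (hφ0 : φ x0 = 0)
    (hfix : ∀ z, φ z = -η * Real.log (∑ y, ∑ xb : Fin k → X,
      Real.exp (((∑ i, φ (xb i)) - c (Fin.cons y (Fin.cons z xb))) / η)
        * (∏ i, ρ (xb i))
        * (ρ y / ∑ xb' : Fin (k + 1) → X,
            Real.exp (((∑ i, φ (xb' i)) - c (Fin.cons y xb')) / η) * ∏ i, ρ (xb' i)))) :
    ∀ z, |φ z| ≤ 4 * M :=
  stmt_10_general ρ hρ k c M η hη hc x0 φ hφ0 hfix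
end

section
/- Strong convexity of the log-partition function on a pinned bounded set: let K = X^{m-1} for a finite set X, fix x̄₀ ∈ K, and let Ũ_C = {θ : K → ℝ : θ_{x̄₀} = 0, ‖θ‖_∞ ≤ C}. For weights ρ̃_{x̄} > 0 and bounded cost c with ‖c‖_∞ ≤ M, the function Ψ(θ) = ∑_{y∈X} log(∑_{x̄∈K} e^{θ_{x̄} - c(y,x̄)} ρ̃_{x̄}) ρ_y is β-strongly convex on Ũ_C with β = e^{-4M-3C} ρ̃_{x̄₀} · min_{x̄} ρ̃_{x̄}, in the sense that its Hessian restricted to directions vanishing at x̄₀ satisfies D²Ψ(θ)(v,v) ≥ β‖v‖² for all θ ∈ Ũ_C and all v with v_{x̄₀} = 0. -/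
/-!
Along a line `t ↦ θ + t v`, each summand `log ∑ₓ e^{θₓ + t vₓ - c(y,x)} ρ̃ₓ` has second derivative
the variance of `v` under the Gibbs weights `pₓ ∝ e^{θₓ - c(y,x)} ρ̃ₓ`. Since `v` vanishes at `x̄₀`,
Cauchy–Schwarz over the remaining points bounds the unnormalised variance below by
`p_{x̄₀} ∑ₓ vₓ² pₓ`. The sup-norm bounds on `θ` and `c` give `p_{x̄₀} ≥ e^{-M} ρ̃_{x̄₀}`,
`pₓ ≥ e^{-C-M} minₓ ρ̃ₓ` and `∑ₓ pₓ ≤ e^{C+M}`, which combine to the constant `e^{-4M-3C}`.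
-/

section

open Real Finset

variable {ι : Type*} [Fintype ι]

/-- The `n`-th `t`-derivative of the partition function `expMoment a v 0`. -/
noncomputable def expMoment (a v : ι → ℝ) (n : ℕ) (t : ℝ) : ℝ :=
  ∑ i, v i ^ n * exp (a i + t * v i)

theorem expMoment_apply_zero (a v : ι → ℝ) (n : ℕ) :
    expMoment a v n 0 = ∑ i, v i ^ n * exp (a i) := by
  simp [expMoment]

theorem hasDerivAt_expMoment (a v : ι → ℝ) (n : ℕ) (t : ℝ) :
    HasDerivAt (expMoment a v n) (expMoment a v (n + 1) t) t := by
  refine HasDerivAt.fun_sum fun i _ => ?_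
  have hlin : HasDerivAt (fun t : ℝ => a i + t * v i) (v i) t := by
    simpa using (hasDerivAt_mul_const (v i)).const_add (a i)
  exact (hlin.exp.const_mul (v i ^ n)).congr_deriv (by ring)

theorem expMoment_zero_pos [Nonempty ι] (a v : ι → ℝ) (t : ℝ) : 0 < expMoment a v 0 t :=
  sum_pos (fun i _ => by simpa using exp_pos _) univ_nonempty

theorem iteratedDeriv_two_sum_log_expMoment_mul [Nonempty ι] {Y : Type*} [Fintype Y]
    (a : Y → ι → ℝ) (v : ι → ℝ) (ρ : Y → ℝ) (t : ℝ) :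
    iteratedDeriv 2 (fun t => ∑ y, log (expMoment (a y) v 0 t) * ρ y) t =
      ∑ y, (expMoment (a y) v 2 t * expMoment (a y) v 0 t
          - expMoment (a y) v 1 t * expMoment (a y) v 1 t) / expMoment (a y) v 0 t ^ 2 * ρ y := by
  have hderiv : deriv (fun t => ∑ y, log (expMoment (a y) v 0 t) * ρ y) =
      fun t => ∑ y, expMoment (a y) v 1 t / expMoment (a y) v 0 t * ρ y := by
    funext t
    refine (HasDerivAt.fun_sum fun y _ => ?_).deriv
    exact ((hasDerivAt_expMoment _ v 0 t).log (expMoment_zero_pos _ v t).ne').mul_const (ρ y)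
  rw [iteratedDeriv_succ, iteratedDeriv_one, hderiv]
  refine (HasDerivAt.fun_sum fun y _ => ?_).deriv
  exact ((hasDerivAt_expMoment _ v 1 t).div (hasDerivAt_expMoment _ v 0 t)
    (expMoment_zero_pos _ v t).ne').mul_const (ρ y)

theorem mul_sum_sq_mul_le_variance_of_eq_zero {p : ι → ℝ} (hp : ∀ i, 0 ≤ p i) (v : ι → ℝ)
    {i₀ : ι} (hv : v i₀ = 0) :
    p i₀ * ∑ i, v i ^ 2 * p i ≤ (∑ i, v i ^ 2 * p i) * (∑ i, p i) - (∑ i, v i * p i) ^ 2 := by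
  classical
  have hcs := sum_sq_le_sum_mul_sum_of_sq_le_mul (univ.erase i₀) (r := fun i => v i * p i)
    (fun i _ => hp i) (fun i _ => mul_nonneg (sq_nonneg (v i)) (hp i))
    (fun i _ => le_of_eq (by ring))
  have hfirst : ∑ i ∈ univ.erase i₀, v i * p i = ∑ i, v i * p i := sum_erase _ (by simp [hv])
  have hsecond : ∑ i ∈ univ.erase i₀, v i ^ 2 * p i = ∑ i, v i ^ 2 * p i :=
    sum_erase _ (by simp [hv])
  have hmass : ∑ i ∈ univ.erase i₀, p i + p i₀ = ∑ i, p i := sum_erase_add _ _ (mem_univ i₀)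
  rw [hfirst, hsecond] at hcs
  rw [← hmass]
  nlinarith [hcs]

theorem le_variance_div_sq {p : ι → ℝ} (hp : ∀ i, 0 < p i) (v : ι → ℝ) {i₀ : ι}
    (hv : v i₀ = 0) {A B Z : ℝ} (hA : A ≤ p i₀) (hB₀ : 0 ≤ B) (hB : ∀ i, B ≤ p i)
    (hZ : ∑ i, p i ≤ Z) :
    A * B * (∑ i, v i ^ 2) / Z ^ 2 ≤
      ((∑ i, v i ^ 2 * p i) * (∑ i, p i) - (∑ i, v i * p i) * (∑ i, v i * p i))
        / (∑ i, p i) ^ 2 := by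
  have hsum_pos : 0 < ∑ i, p i := sum_pos (fun i _ => hp i) ⟨i₀, mem_univ i₀⟩
  have hsq : B * ∑ i, v i ^ 2 ≤ ∑ i, v i ^ 2 * p i := by
    rw [mul_sum]
    exact sum_le_sum fun i _ => by
      rw [mul_comm]
      exact mul_le_mul_of_nonneg_left (hB i) (sq_nonneg _)
  have hnum_nonneg : 0 ≤ p i₀ * ∑ i, v i ^ 2 * p i :=
    mul_nonneg (hp i₀).le (sum_nonneg fun i _ => mul_nonneg (sq_nonneg _) (hp i).le)
  calc A * B * (∑ i, v i ^ 2) / Z ^ 2 ≤ p i₀ * (∑ i, v i ^ 2 * p i) / Z ^ 2 := by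
        gcongr ?_ / _
        rw [mul_assoc]
        calc A * (B * ∑ i, v i ^ 2) ≤ p i₀ * (B * ∑ i, v i ^ 2) :=
              mul_le_mul_of_nonneg_right hA (mul_nonneg hB₀ (sum_nonneg fun i _ => sq_nonneg _))
          _ ≤ p i₀ * ∑ i, v i ^ 2 * p i := mul_le_mul_of_nonneg_left hsq (hp i₀).le
    _ ≤ p i₀ * (∑ i, v i ^ 2 * p i) / (∑ i, p i) ^ 2 := by gcongr
    _ ≤ _ := by
        gcongr ?_ / _
        rw [← sq]
        exact mul_sum_sq_mul_le_variance_of_eq_zero (fun i => (hp i).le) v hv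

theorem sum_exp_sub_mul_eq_expMoment (θ v d : ι → ℝ) {w : ι → ℝ} (hw : ∀ i, 0 < w i) (t : ℝ) :
    ∑ i, exp ((θ i + t * v i) - d i) * w i = expMoment (fun i => θ i - d i + log (w i)) v 0 t := by
  refine sum_congr rfl fun i _ => ?_
  rw [pow_zero, one_mul, show θ i - d i + log (w i) + t * v i = (θ i + t * v i - d i) + log (w i)
    by ring, exp_add, exp_log (hw i)]

theorem exp_mul_inf'_mul_sum_sq_le_variance [Nonempty ι] {θ d w v : ι → ℝ} {C M : ℝ} {i₀ : ι}
    (hw : ∀ i, 0 < w i) (hw₁ : ∑ i, w i = 1) (hθ : ∀ i, |θ i| ≤ C) (hθ₀ : θ i₀ = 0)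
    (hd : ∀ i, |d i| ≤ M) (hv : v i₀ = 0) :
    let a := fun i => θ i - d i + log (w i)
    exp (-4 * M - 3 * C) * w i₀ * univ.inf' univ_nonempty w * ∑ i, v i ^ 2 ≤
      (expMoment a v 2 0 * expMoment a v 0 0 - expMoment a v 1 0 * expMoment a v 1 0)
        / expMoment a v 0 0 ^ 2 := by
  intro a
  set p := fun i => exp (θ i - d i) * w i
  have hp : ∀ i, 0 < p i := fun i => mul_pos (exp_pos _) (hw i)
  have hap : ∀ i, exp (a i) = p i := fun i => by simp only [a, p, exp_add, exp_log (hw i)]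
  have hmin_pos : 0 < univ.inf' univ_nonempty w := (lt_inf'_iff _).2 fun i _ => hw i
  have hconst : exp (-4 * M - 3 * C) = exp (-M) * exp (-C - M) / exp (C + M) ^ 2 := by
    rw [eq_div_iff (by positivity), sq, ← exp_add, ← exp_add, ← exp_add]
    ring_nf
  have hA : exp (-M) * w i₀ ≤ p i₀ := by
    refine mul_le_mul_of_nonneg_right (exp_le_exp.2 ?_) (hw i₀).le
    linarith [(abs_le.1 (hd i₀)).2]
  have hB : ∀ i, exp (-C - M) * univ.inf' univ_nonempty w ≤ p i := fun i =>
    mul_le_mul (exp_le_exp.2 (by linarith [(abs_le.1 (hθ i)).1, (abs_le.1 (hd i)).2]))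
      (inf'_le _ (mem_univ i)) hmin_pos.le (exp_pos _).le
  have hZ : ∑ i, p i ≤ exp (C + M) :=
    calc ∑ i, p i ≤ ∑ i, exp (C + M) * w i :=
          sum_le_sum fun i _ => mul_le_mul_of_nonneg_right
            (exp_le_exp.2 (by linarith [(abs_le.1 (hθ i)).2, (abs_le.1 (hd i)).1])) (hw i).le
      _ = exp (C + M) := by rw [← mul_sum, hw₁, mul_one]
  simp only [expMoment_apply_zero, pow_zero, one_mul, pow_one, hap]
  refine le_of_eq_of_le ?_ (le_variance_div_sq hp v hv hA (by positivity) hB hZ)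
  rw [hconst]
  ring

end

theorem stmt_12_general {X : Type*} [Fintype X] [Nonempty X]
    (k : ℕ)
    (ρ : X → ℝ) (hρ : ∀ x, 0 < ρ x) (hρs : ∑ x, ρ x = 1)
    (c : X → (Fin k → X) → ℝ) (M C : ℝ)
    (hc : ∀ y xb, |c y xb| ≤ M)
    (xb0 : Fin k → X) :
    ∀ θ : (Fin k → X) → ℝ, θ xb0 = 0 → (∀ xb, |θ xb| ≤ C) →
    ∀ v : (Fin k → X) → ℝ, v xb0 = 0 →
      Real.exp (-4 * M - 3 * C) * (∏ i, ρ (xb0 i))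
          * (Finset.univ.inf' Finset.univ_nonempty (fun xb : Fin k → X => ∏ i, ρ (xb i)))
          * (∑ xb, (v xb) ^ 2)
        ≤ iteratedDeriv 2
            (fun t : ℝ => ∑ y, Real.log
              (∑ xb, Real.exp ((θ xb + t * v xb) - c y xb) * ∏ i, ρ (xb i)) * ρ y) 0 := by
  intro θ hθ₀ hθ v hv
  have hw : ∀ xb : Fin k → X, 0 < ∏ i, ρ (xb i) := fun xb => Finset.prod_pos fun i _ => hρ _
  have hw₁ : ∑ xb : Fin k → X, ∏ i, ρ (xb i) = 1 := by
    rw [← Fintype.prod_sum]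
    simp [hρs]
  simp only [sum_exp_sub_mul_eq_expMoment θ v _ hw]
  rw [iteratedDeriv_two_sum_log_expMoment_mul, ← mul_one (_ * _), ← hρs, Finset.mul_sum]
  exact Finset.sum_le_sum fun y _ => mul_le_mul_of_nonneg_right
    (exp_mul_inf'_mul_sum_sq_le_variance hw hw₁ hθ hθ₀ (hc y) hv) (hρ y).le

/-- Strong convexity of the log-partition function on the pinned bounded set
`Ũ_C = {θ : θ(x̄₀) = 0, ‖θ‖_∞ ≤ C}`: for every `θ ∈ Ũ_C` and every direction `v`
vanishing at `x̄₀`, the second derivative of `t ↦ Ψ(θ + t v)` at `0` is at least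
`β ‖v‖²` with `β = e^{-4M-3C} ρ̃(x̄₀) minₓ ρ̃(x̄)`. -/
theorem stmt_12 {X : Type*} [Fintype X] [Nonempty X]
    (k : ℕ) (hk : 0 < k)
    (ρ : X → ℝ) (hρ : ∀ x, 0 < ρ x) (hρs : ∑ x, ρ x = 1)
    (c : X → (Fin k → X) → ℝ) (M C : ℝ)
    (hc : ∀ y xb, |c y xb| ≤ M) (hC : 0 < C)
    (xb0 : Fin k → X) :
    ∀ θ : (Fin k → X) → ℝ, θ xb0 = 0 → (∀ xb, |θ xb| ≤ C) →
    ∀ v : (Fin k → X) → ℝ, v xb0 = 0 →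
      Real.exp (-4 * M - 3 * C) * (∏ i, ρ (xb0 i))
          * (Finset.univ.inf' Finset.univ_nonempty (fun xb : Fin k → X => ∏ i, ρ (xb i)))
          * (∑ xb, (v xb) ^ 2)
        ≤ iteratedDeriv 2
            (fun t : ℝ => ∑ y, Real.log
              (∑ xb, Real.exp ((θ xb + t * v xb) - c y xb) * ∏ i, ρ (xb i)) * ρ y) 0 :=
  stmt_12_general k ρ hρ hρs c M C hc xb0
end

section
/- Hessian of log-sum-exp decomposition: for z : {1,...,K} → (0,∞) and s₀ > 0, the matrix (1/(s₀ + ∑ⱼ zⱼ)²) · (diag(z)·(s₀ + ∑ⱼ zⱼ) - z ⊗ z) is positive definite, with smallest eigenvalue at least s₀ · minⱼ zⱼ / (s₀ + ∑ⱼ zⱼ)². -/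
/-- The Hessian of log-sum-exp decomposition is positive definite: for positive `z` and
`s₀ > 0`, the quadratic form of `(1/(s₀+∑z)²)(diag(z)(s₀+∑z) - z⊗z)` is bounded below by
`s₀ minⱼ zⱼ / (s₀+∑z)²` times the squared norm. -/
theorem stmt_13 {K : ℕ} (hK : 0 < K) (z : Fin K → ℝ) (hz : ∀ j, 0 < z j)
    (s0 : ℝ) (hs0 : 0 < s0) :
    ∀ v : Fin K → ℝ,
      (s0 * (Finset.univ.inf'
          (by haveI := Fin.pos_iff_nonempty.mp hK; exact Finset.univ_nonempty) z)
        / (s0 + ∑ j, z j) ^ 2) * ∑ j, (v j) ^ 2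
      ≤ (1 / (s0 + ∑ j, z j) ^ 2)
        * ((∑ j, z j * (v j) ^ 2) * (s0 + ∑ j, z j) - (∑ j, z j * v j) ^ 2) := by
  intro v
  haveI : Nonempty (Fin K) := Fin.pos_iff_nonempty.mp hK
  set S := ∑ j, z j with hS
  have hSpos : 0 < S := Finset.sum_pos (fun j _ => hz j) Finset.univ_nonempty
  have hden : 0 < (s0 + S) ^ 2 := by positivity
  set m := Finset.univ.inf' Finset.univ_nonempty z with hm
  have hmle : ∀ j, m ≤ z j := fun j => Finset.inf'_le _ (Finset.mem_univ j)
  -- Cauchy–Schwarz: (∑ z v)² ≤ S * ∑ z v²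
  have hCS : (∑ j, z j * v j) ^ 2 ≤ S * ∑ j, z j * (v j) ^ 2 := by
    have h := Finset.sum_mul_sq_le_sq_mul_sq Finset.univ
      (fun j => Real.sqrt (z j)) (fun j => Real.sqrt (z j) * v j)
    have e1 : ∀ j, Real.sqrt (z j) * (Real.sqrt (z j) * v j) = z j * v j := fun j => by
      rw [← mul_assoc, Real.mul_self_sqrt (hz j).le]
    have e2 : ∀ j, Real.sqrt (z j) ^ 2 = z j := fun j => Real.sq_sqrt (hz j).le
    have e3 : ∀ j, (Real.sqrt (z j) * v j) ^ 2 = z j * (v j) ^ 2 := fun j => by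
      rw [mul_pow, e2]
    simp only [e1, e2, e3] at h
    exact h
  have hkey : s0 * m * ∑ j, (v j) ^ 2
      ≤ (∑ j, z j * (v j) ^ 2) * (s0 + S) - (∑ j, z j * v j) ^ 2 := by
    have h1 : s0 * m * ∑ j, (v j) ^ 2 ≤ s0 * ∑ j, z j * (v j) ^ 2 := by
      rw [Finset.mul_sum, Finset.mul_sum]
      refine Finset.sum_le_sum fun j _ => ?_
      have : m * (v j) ^ 2 ≤ z j * (v j) ^ 2 :=
        mul_le_mul_of_nonneg_right (hmle j) (sq_nonneg _)
      nlinarith [hs0.le]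
    nlinarith
  rw [div_mul_eq_mul_div, one_div, inv_mul_eq_div]
  exact (div_le_div_iff_of_pos_right hden).mpr hkey
end

section
/- Uniqueness of discrete entropic dual potentials up to additive constants: if (φ¹,...,φᵐ) and (φ̂¹,...,φ̂ᵐ) are two maximizers of the regularized dual functional (φ¹,...,φᵐ) ↦ ∑ᵢ∑_{xⁱ} φⁱ_{xⁱ}μⁱ_{xⁱ} - η∑_{x̄} exp((∑ᵢφⁱ_{x̄ⁱ} - c(x̄))/η)(⊗μⁱ)_{x̄}, then there exist constants C¹,...,Cᵐ with ∑ᵢCⁱ = 0 such that φ̂ⁱ = φⁱ + Cⁱ for each i. -/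
open scoped BigOperators

/-- The regularized dual functional. -/
noncomputable def dualFunctional {ι : Type*} [Fintype ι] [DecidableEq ι]
    {X : ι → Type*} [∀ i, Fintype (X i)]
    (μ : ∀ i, X i → ℝ) (c : (∀ i, X i) → ℝ) (η : ℝ)
    (ψ : ∀ i, X i → ℝ) : ℝ :=
  (∑ i, ∑ z, ψ i z * μ i z)
    - η * ∑ xb : ∀ i, X i, Real.exp (((∑ i, ψ i (xb i)) - c xb) / η) * ∏ i, μ i (xb i)

lemma exp_mid_le (a b : ℝ) : 2 * Real.exp ((a + b) / 2) ≤ Real.exp a + Real.exp b := by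
  have h1 : Real.exp ((a + b) / 2) = Real.exp (a / 2) * Real.exp (b / 2) := by
    rw [← Real.exp_add]; ring_nf
  have h2 : Real.exp a = Real.exp (a / 2) ^ 2 := by
    rw [← Real.exp_nat_mul]; push_cast; ring_nf
  have h3 : Real.exp b = Real.exp (b / 2) ^ 2 := by
    rw [← Real.exp_nat_mul]; push_cast; ring_nf
  nlinarith [sq_nonneg (Real.exp (a / 2) - Real.exp (b / 2))]

lemma exp_mid_eq (a b : ℝ) (h : Real.exp a + Real.exp b - 2 * Real.exp ((a + b) / 2) = 0) :
    a = b := by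
  have h1 : Real.exp ((a + b) / 2) = Real.exp (a / 2) * Real.exp (b / 2) := by
    rw [← Real.exp_add]; ring_nf
  have h2 : Real.exp a = Real.exp (a / 2) ^ 2 := by
    rw [← Real.exp_nat_mul]; push_cast; ring_nf
  have h3 : Real.exp b = Real.exp (b / 2) ^ 2 := by
    rw [← Real.exp_nat_mul]; push_cast; ring_nf
  have : Real.exp (a / 2) = Real.exp (b / 2) := by
    nlinarith [sq_nonneg (Real.exp (a / 2) - Real.exp (b / 2))]
  have := Real.exp_injective this
  linarith

/-- Uniqueness of discrete entropic dual potentials up to additive constants summing to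
zero: any two maximizers of the regularized dual functional differ by constants
`C¹,...,Cᵐ` with `∑ᵢ Cⁱ = 0`. -/
theorem stmt_16 {ι : Type*} [Fintype ι] [DecidableEq ι]
    {X : ι → Type*} [∀ i, Fintype (X i)] [∀ i, Nonempty (X i)]
    (μ : ∀ i, X i → ℝ) (hμ : ∀ i z, 0 < μ i z) (hμs : ∀ i, ∑ z, μ i z = 1)
    (c : (∀ i, X i) → ℝ) (η : ℝ) (hη : 0 < η)
    (φ φh : ∀ i, X i → ℝ)
    (hφ : ∀ ψ, dualFunctional μ c η ψ ≤ dualFunctional μ c η φ)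
    (hφh : ∀ ψ, dualFunctional μ c η ψ ≤ dualFunctional μ c η φh) :
    ∃ C : ι → ℝ, ∑ i, C i = 0 ∧ ∀ i z, φh i z = φ i z + C i := by
  classical
  set ψ : ∀ i, X i → ℝ := fun i z => (φ i z + φh i z) / 2 with hψ
  set a : (∀ i, X i) → ℝ := fun x => ((∑ i, φ i (x i)) - c x) / η with ha
  set b : (∀ i, X i) → ℝ := fun x => ((∑ i, φh i (x i)) - c x) / η with hb
  set w : (∀ i, X i) → ℝ := fun x => ∏ i, μ i (x i) with hw
  have hwpos : ∀ x, 0 < w x := fun x => Finset.prod_pos fun i _ => hμ i (x i)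
  -- midpoint exponent
  have hmid : ∀ x : ∀ i, X i, ((∑ i, ψ i (x i)) - c x) / η = (a x + b x) / 2 := by
    intro x
    have : (∑ i, ψ i (x i)) = ((∑ i, φ i (x i)) + ∑ i, φh i (x i)) / 2 := by
      rw [← Finset.sum_add_distrib, ← Finset.sum_div]
    rw [this, ha, hb]
    field_simp
    ring
  -- linear part
  have hlin : ∑ i, ∑ z, ψ i z * μ i z
      = ((∑ i, ∑ z, φ i z * μ i z) + ∑ i, ∑ z, φh i z * μ i z) / 2 := by
    rw [← Finset.sum_add_distrib, Finset.sum_div]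
    refine Finset.sum_congr rfl fun i _ => ?_
    rw [← Finset.sum_add_distrib, Finset.sum_div]
    refine Finset.sum_congr rfl fun z _ => ?_
    simp only [hψ]
    ring
  have hDψ : dualFunctional μ c η ψ
      = ((∑ i, ∑ z, φ i z * μ i z) + ∑ i, ∑ z, φh i z * μ i z) / 2
        - η * ∑ x : ∀ i, X i, Real.exp ((a x + b x) / 2) * w x := by
    rw [dualFunctional, hlin]
    congr 2
    refine Finset.sum_congr rfl fun x _ => ?_
    rw [hmid x]
  have hDφ : dualFunctional μ c η φ
      = (∑ i, ∑ z, φ i z * μ i z) - η * ∑ x : ∀ i, X i, Real.exp (a x) * w x := rfl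
  have hDφh : dualFunctional μ c η φh
      = (∑ i, ∑ z, φh i z * μ i z) - η * ∑ x : ∀ i, X i, Real.exp (b x) * w x := rfl
  set S : ℝ := ∑ x : ∀ i, X i,
      (Real.exp (a x) + Real.exp (b x) - 2 * Real.exp ((a x + b x) / 2)) * w x with hS
  have hSsum : S = (∑ x : ∀ i, X i, Real.exp (a x) * w x)
      + (∑ x : ∀ i, X i, Real.exp (b x) * w x)
      - 2 * ∑ x : ∀ i, X i, Real.exp ((a x + b x) / 2) * w x := by
    rw [hS, Finset.mul_sum, ← Finset.sum_add_distrib, ← Finset.sum_sub_distrib]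
    refine Finset.sum_congr rfl fun x _ => ?_
    ring
  have hterm_nonneg : ∀ x ∈ Finset.univ (α := ∀ i, X i),
      0 ≤ (Real.exp (a x) + Real.exp (b x) - 2 * Real.exp ((a x + b x) / 2)) * w x := by
    intro x _
    have := exp_mid_le (a x) (b x)
    have := (hwpos x).le
    nlinarith
  have hle1 : dualFunctional μ c η ψ ≤ dualFunctional μ c η φ := hφ ψ
  have hle2 : dualFunctional μ c η ψ ≤ dualFunctional μ c η φh := hφh ψ
  have hSle : η * S ≤ 0 := by
    have : dualFunctional μ c η φ + dualFunctional μ c η φh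
        - 2 * dualFunctional μ c η ψ = -(η * S) := by
      rw [hDφ, hDφh, hDψ, hSsum]; ring
    linarith
  have hSzero : S = 0 := by
    have hSnonneg : 0 ≤ S := Finset.sum_nonneg hterm_nonneg
    nlinarith
  have hab : ∀ x : ∀ i, X i, a x = b x := by
    intro x
    have hx := (Finset.sum_eq_zero_iff_of_nonneg hterm_nonneg).mp hSzero x (Finset.mem_univ x)
    have hwne := (hwpos x).ne'
    have : Real.exp (a x) + Real.exp (b x) - 2 * Real.exp ((a x + b x) / 2) = 0 := by
      rcases mul_eq_zero.mp hx with h | h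
      · exact h
      · exact absurd h hwne
    exact exp_mid_eq _ _ this
  -- sums of potentials agree
  have hsum : ∀ x : ∀ i, X i, ∑ i, (φh i (x i) - φ i (x i)) = 0 := by
    intro x
    have := hab x
    rw [ha, hb] at this
    have h' : (∑ i, φ i (x i)) = ∑ i, φh i (x i) := by
      field_simp at this
      linarith
    rw [Finset.sum_sub_distrib]
    linarith
  set z0 : ∀ i, X i := fun i => Classical.arbitrary (X i) with hz0
  refine ⟨fun i => φh i (z0 i) - φ i (z0 i), hsum z0, ?_⟩
  intro j z
  have h1 := hsum (Function.update z0 j z)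
  have h2 := hsum z0
  have h3 : ∑ i, (φh i (Function.update z0 j z i) - φ i (Function.update z0 j z i))
      - ∑ i, (φh i (z0 i) - φ i (z0 i))
      = (φh j z - φ j z) - (φh j (z0 j) - φ j (z0 j)) := by
    rw [← Finset.sum_sub_distrib]
    rw [Finset.sum_eq_single j]
    · rw [Function.update_self]
    · intro i _ hij
      rw [Function.update_of_ne hij]
      ring
    · intro h; exact absurd (Finset.mem_univ j) h
  rw [h1, h2] at h3
  show φh j z = φ j z + (φh j (z0 j) - φ j (z0 j))
  linarith
end

section
/- First-order characterization of the regularized dual optimum: (φ¹,...,φᵐ) maximizes the functional ∑ᵢ∑_{xⁱ}φⁱ_{xⁱ}μⁱ_{xⁱ} - η∑_{x̄}exp((∑ᵢφⁱ_{x̄ⁱ}-c(x̄))/η)(⊗μⁱ)_{x̄} if and only if for every i and every z ∈ Xⁱ, ∑_{x̄ : x̄ⁱ=z} exp((∑ⱼφʲ_{x̄ʲ} - c(x̄))/η) ∏_{j≠i} μʲ_{x̄ʲ} = 1, i.e. the Gibbs measure exp((∑φⁱ-c)/η)·⊗μⁱ has marginals μ¹,...,μᵐ. -/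
open scoped BigOperators

/-!
By the tangent-line bound `exp s ≥ 1 + s`, the dual functional is concave with supergradient
`μⁱ - Mⁱ` at `φ`, where `Mⁱ` is the `i`-th marginal of the Gibbs density
`exp ((∑ φ - c) / η) · ⊗μ`; so matching marginals make `φ` a maximizer. Conversely, shifting
`φⁱ(z)` by `η u` changes the functional by `η (u μⁱ(z) - (exp u - 1) Mⁱ(z))`, and maximality at
`u = 0` forces the derivative `μⁱ(z) - Mⁱ(z)` to vanish.
-/

open Finset Real

theorem eq_of_forall_mul_le_exp_sub_one_mul {a b : ℝ} (h : ∀ u, u * a ≤ (exp u - 1) * b) :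
    b = a := by
  have hmin : IsLocalMin (fun u => (exp u - 1) * b - u * a) 0 :=
    Filter.Eventually.of_forall fun u => by simpa using h u
  have hderiv : HasDerivAt (fun u => (exp u - 1) * b - u * a) (exp 0 * b - 1 * a) 0 :=
    (((hasDerivAt_exp 0).sub_const 1).mul_const b).sub ((hasDerivAt_id 0).mul_const a)
  simpa [sub_eq_zero] using hmin.hasDerivAt_eq_zero hderiv

section

variable {ι : Type*} [Fintype ι] {X : ι → Type*} (μ : ∀ i, X i → ℝ) (c : (∀ i, X i) → ℝ) (η : ℝ)

noncomputable def gibbsDensity (φ : ∀ i, X i → ℝ) (x : ∀ i, X i) : ℝ :=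
  exp (((∑ i, φ i (x i)) - c x) / η) * ∏ i, μ i (x i)

theorem gibbsDensity_add (φ d : ∀ i, X i → ℝ) (x : ∀ i, X i) :
    gibbsDensity μ c η (φ + d) x = gibbsDensity μ c η φ x * exp ((∑ i, d i (x i)) / η) := by
  simp only [gibbsDensity, Pi.add_apply, sum_add_distrib]
  rw [add_sub_right_comm, add_div, exp_add]
  ring

theorem sum_single_single_apply [DecidableEq ι] [∀ i, DecidableEq (X i)]
    (i : ι) (z : X i) (t : ℝ) (x : ∀ j, X j) :
    ∑ j, (Pi.single i (Pi.single z t) : ∀ j, X j → ℝ) j (x j) = if x i = z then t else 0 := by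
  rw [Fintype.sum_eq_single i fun j hj => by simp [hj]]
  simp [Pi.single_apply]

variable [DecidableEq ι] [∀ i, Fintype (X i)]

theorem dualFunctional_eq (ψ : ∀ i, X i → ℝ) :
    dualFunctional μ c η ψ = (∑ i, ∑ z, ψ i z * μ i z) - η * ∑ x, gibbsDensity μ c η ψ x :=
  rfl

variable [∀ i, DecidableEq (X i)]

theorem sum_apply_mul_eq_sum_mul_sum_fiber {R : Type*} [CommSemiring R]
    (j : ι) (f : X j → R) (g : (∀ i, X i) → R) :
    ∑ x, f (x j) * g x = ∑ z, f z * ∑ x with x j = z, g x := by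
  rw [← Finset.sum_fiberwise univ (fun x => x j)]
  refine sum_congr rfl fun z _ => ?_
  rw [mul_sum]
  exact sum_congr rfl fun x hx => by rw [(mem_filter.mp hx).2]

noncomputable def gibbsMarginal (φ : ∀ i, X i → ℝ) (i : ι) (z : X i) : ℝ :=
  ∑ x with x i = z, gibbsDensity μ c η φ x

theorem gibbsMarginal_eq_mul (φ : ∀ i, X i → ℝ) (i : ι) (z : X i) :
    gibbsMarginal μ c η φ i z = μ i z * ∑ x : ∀ j, X j, if x i = z then
      exp (((∑ j, φ j (x j)) - c x) / η) * ∏ j ∈ univ.erase i, μ j (x j) else 0 := by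
  rw [gibbsMarginal, sum_filter, mul_sum]
  refine sum_congr rfl fun x _ => ?_
  split_ifs with hx
  · rw [gibbsDensity, ← mul_prod_erase univ (fun j => μ j (x j)) (mem_univ i), hx]
    ring
  · rw [mul_zero]

theorem gibbsMarginal_eq_self_iff {φ : ∀ i, X i → ℝ} {i : ι} {z : X i} (hμ : μ i z ≠ 0) :
    gibbsMarginal μ c η φ i z = μ i z ↔ (∑ x : ∀ j, X j, if x i = z then
      exp (((∑ j, φ j (x j)) - c x) / η) * ∏ j ∈ univ.erase i, μ j (x j) else 0) = 1 := by
  rw [gibbsMarginal_eq_mul, mul_eq_left₀ hμ]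

theorem dualFunctional_add_single (hη : η ≠ 0) (φ : ∀ i, X i → ℝ) (i : ι) (z : X i) (u : ℝ) :
    dualFunctional μ c η (φ + Pi.single i (Pi.single z (η * u))) =
      dualFunctional μ c η φ + η * (u * μ i z - (exp u - 1) * gibbsMarginal μ c η φ i z) := by
  set δ : ∀ j, X j → ℝ := Pi.single i (Pi.single z (η * u))
  have hlin : ∑ j, ∑ w, (φ + δ) j w * μ j w = (∑ j, ∑ w, φ j w * μ j w) + η * u * μ i z := by
    simp only [Pi.add_apply, add_mul, sum_add_distrib, add_right_inj]
    rw [Fintype.sum_eq_single i fun j hj => by simp [δ, hj],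
      Fintype.sum_eq_single z fun w hw => by simp [δ, hw]]
    simp [δ, mul_assoc]
  have hexp : ∑ x, gibbsDensity μ c η (φ + δ) x =
      (∑ x, gibbsDensity μ c η φ x) + (exp u - 1) * gibbsMarginal μ c η φ i z := by
    have hterm : ∀ x, gibbsDensity μ c η (φ + δ) x =
        gibbsDensity μ c η φ x + if x i = z then (exp u - 1) * gibbsDensity μ c η φ x else 0 := by
      intro x
      rw [gibbsDensity_add, sum_single_single_apply]
      split_ifs
      · rw [mul_div_cancel_left₀ u hη]
        ring
      · simp
    simp only [hterm, sum_add_distrib, ← sum_filter, ← mul_sum, gibbsMarginal]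
  rw [dualFunctional_eq, dualFunctional_eq, hlin, hexp]
  ring

theorem dualFunctional_add_le (hη : 0 < η) (hμ : ∀ i z, 0 ≤ μ i z) (φ d : ∀ i, X i → ℝ) :
    dualFunctional μ c η (φ + d) ≤ dualFunctional μ c η φ +
      ∑ i, ∑ z, d i z * (μ i z - gibbsMarginal μ c η φ i z) := by
  have htangent : ∀ x, η * gibbsDensity μ c η φ x + (∑ i, d i (x i)) * gibbsDensity μ c η φ x ≤
      η * gibbsDensity μ c η (φ + d) x := by
    intro x
    have hpos : 0 ≤ gibbsDensity μ c η φ x :=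
      mul_nonneg (exp_pos _).le (prod_nonneg fun i _ => hμ i _)
    have hexp := add_one_le_exp ((∑ i, d i (x i)) / η)
    rw [gibbsDensity_add]
    calc η * gibbsDensity μ c η φ x + (∑ i, d i (x i)) * gibbsDensity μ c η φ x
        = η * (gibbsDensity μ c η φ x * ((∑ i, d i (x i)) / η + 1)) := by field_simp; ring
      _ ≤ _ := by gcongr
  have hmarginal : ∑ x, (∑ i, d i (x i)) * gibbsDensity μ c η φ x =
      ∑ i, ∑ z, d i z * gibbsMarginal μ c η φ i z := by
    simp only [sum_mul]
    rw [sum_comm]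
    exact sum_congr rfl fun i _ => sum_apply_mul_eq_sum_mul_sum_fiber i (d i) _
  have hsum := sum_le_sum fun x (_ : x ∈ univ) => htangent x
  rw [sum_add_distrib, ← mul_sum, ← mul_sum, hmarginal] at hsum
  simp only [dualFunctional_eq, Pi.add_apply, add_mul, mul_sub, sum_add_distrib, sum_sub_distrib]
  linarith

end

theorem stmt_17_general {ι : Type*} [Fintype ι] [DecidableEq ι]
    {X : ι → Type*} [∀ i, Fintype (X i)] [∀ i, DecidableEq (X i)]
    (μ : ∀ i, X i → ℝ) (hμ : ∀ i z, 0 < μ i z)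
    (c : (∀ i, X i) → ℝ) (η : ℝ) (hη : 0 < η)
    (φ : ∀ i, X i → ℝ) :
    (∀ ψ, dualFunctional μ c η ψ ≤ dualFunctional μ c η φ)
      ↔ ∀ i (z : X i),
          (∑ xb : ∀ j, X j, if xb i = z then
              Real.exp (((∑ j, φ j (xb j)) - c xb) / η)
                * ∏ j ∈ Finset.univ.erase i, μ j (xb j)
            else 0) = 1 := by
  refine Iff.trans ?_ (forall₂_congr fun i z => gibbsMarginal_eq_self_iff μ c η (hμ i z).ne')
  constructor
  · intro hmax i z
    refine eq_of_forall_mul_le_exp_sub_one_mul fun u => ?_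
    have h := hmax (φ + Pi.single i (Pi.single z (η * u)))
    rw [dualFunctional_add_single μ c η hη.ne', add_le_iff_nonpos_right] at h
    linarith [nonpos_of_mul_nonpos_right h hη]
  · intro hmarginal ψ
    have h := dualFunctional_add_le μ c η hη (fun i z => (hμ i z).le) φ (ψ - φ)
    simpa only [add_sub_cancel, hmarginal, sub_self, mul_zero, sum_const_zero, add_zero] using h

/-- First-order characterization of the regularized dual optimum: `(φ¹,...,φᵐ)`
maximizes the dual functional iff the associated Gibbs measure has marginals
`μ¹,...,μᵐ`, i.e. for all `i` and `z ∈ Xⁱ`,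
`∑_{x̄ : x̄ⁱ = z} exp((∑ⱼ φʲ(x̄ʲ) - c(x̄))/η) ∏_{j≠i} μʲ(x̄ʲ) = 1`. -/
theorem stmt_17 {ι : Type*} [Fintype ι] [DecidableEq ι]
    {X : ι → Type*} [∀ i, Fintype (X i)] [∀ i, DecidableEq (X i)]
    (μ : ∀ i, X i → ℝ) (hμ : ∀ i z, 0 < μ i z) (hμs : ∀ i, ∑ z, μ i z = 1)
    (c : (∀ i, X i) → ℝ) (η : ℝ) (hη : 0 < η)
    (φ : ∀ i, X i → ℝ) :
    (∀ ψ, dualFunctional μ c η ψ ≤ dualFunctional μ c η φ)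
      ↔ ∀ i (z : X i),
          (∑ xb : ∀ j, X j, if xb i = z then
              Real.exp (((∑ j, φ j (xb j)) - c xb) / η)
                * ∏ j ∈ Finset.univ.erase i, μ j (xb j)
            else 0) = 1 :=
  stmt_17_general μ hμ c η hη φ
end

section
/- Symmetry of optimal potentials under symmetric data: if all marginals are equal (μⁱ = ρ for all i) and the cost c_ε(x¹,...,xᵐ) = ε∑_{2≤i<j≤m} w(xⁱ,xʲ) + ∑_{i=2}^m w(x¹,xⁱ) with w symmetric, then there exists a maximizer (φ¹,...,φᵐ) of the regularized dual problem with φ² = φ³ = ... = φᵐ. -/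
open scoped BigOperators

/-- The interpolating cost `c_ε(x̄) = ε ∑_{0 < i < j} w(x̄ᵢ, x̄ⱼ) + ∑_{i ≠ 0} w(x̄₀, x̄ᵢ)`
on `m + 1` coordinates indexed by `Fin (m+1)`, coordinate `0` playing the role of `x¹`. -/
noncomputable def cEps {X : Type*} (m : ℕ) (w : X → X → ℝ) (ε : ℝ)
    (xb : Fin (m + 1) → X) : ℝ :=
  ε * (∑ i ∈ Finset.univ.filter (fun i : Fin (m + 1) => i ≠ 0),
        ∑ j ∈ Finset.univ.filter (fun j : Fin (m + 1) => i < j), w (xb i) (xb j))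
    + ∑ i ∈ Finset.univ.filter (fun i : Fin (m + 1) => i ≠ 0), w (xb 0) (xb i)

/-!
Writing `p(x̄) = ∏ᵢ ρ(x̄ⁱ)`, the dual functional equals `∑_x̄ p(x̄) h_x̄(∑ᵢ φⁱ(x̄ⁱ))` with
`h_x̄(t) = t - η exp ((t - c(x̄)) / η)`, a concave function bounded above by `c(x̄) - η`.
Hence the functional is concave, unchanged by adding to the potentials constants of total
sum zero, and a superlevel set controls every sum `∑ᵢ φⁱ(x̄ⁱ)`; after normalizing the means
of all potentials but the first to zero, this bounds the potentials themselves, and a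
maximizer exists by compactness. Permutations of the coordinates fixing the first one leave
`c_ε` and hence the functional invariant, so averaging a maximizer over all of them yields,
by concavity, a maximizer whose potentials `φ², …, φᵐ` coincide.
-/

open Finset Real Equiv

section Integrand

variable {η : ℝ}

noncomputable def dualIntegrand (η a t : ℝ) : ℝ := t - η * exp ((t - a) / η)

lemma dualIntegrand_le (hη : 0 < η) (a t : ℝ) : dualIntegrand η a t ≤ a - η := by
  have h := mul_le_mul_of_nonneg_left (add_one_le_exp ((t - a) / η)) hη.le
  rw [mul_add, mul_div_cancel₀ _ hη.ne'] at h
  rw [dualIntegrand]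
  linarith

lemma mem_Icc_of_le_dualIntegrand (hη : 0 < η) {a t L : ℝ} (h : L ≤ dualIntegrand η a t) :
    t ∈ Set.Icc L (2 * a - L) := by
  have h2 := mul_le_mul_of_nonneg_left (two_mul_le_exp (x := (t - a) / η)) hη.le
  rw [mul_left_comm, mul_div_cancel₀ _ hη.ne'] at h2
  rw [dualIntegrand] at h
  constructor <;> nlinarith [exp_pos ((t - a) / η)]

lemma concaveOn_dualIntegrand (hη : 0 ≤ η) (a : ℝ) :
    ConcaveOn ℝ Set.univ (dualIntegrand η a) := by
  refine ⟨convex_univ, fun s _ t _ p q hp hq hpq => ?_⟩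
  have hexp := convexOn_exp.2 (Set.mem_univ ((s - a) / η)) (Set.mem_univ ((t - a) / η)) hp hq hpq
  have harg : p • ((s - a) / η) + q • ((t - a) / η) = (p • s + q • t - a) / η := by
    simp only [smul_eq_mul]
    linear_combination (-a / η) * hpq
  rw [harg] at hexp
  have := mul_le_mul_of_nonneg_left hexp hη
  simp only [dualIntegrand, smul_eq_mul] at this ⊢
  nlinarith

end Integrand

lemma abs_sum_mul_le {α : Type*} [Fintype α] {p f : α → ℝ} {R : ℝ} (hp : ∀ a, 0 ≤ p a)
    (hp1 : ∑ a, p a = 1) (hf : ∀ a, |f a| ≤ R) : |∑ a, f a * p a| ≤ R := by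
  calc |∑ a, f a * p a| ≤ ∑ a, |f a| * p a := by
        refine (abs_sum_le_sum_abs _ _).trans_eq (sum_congr rfl fun a _ => ?_)
        rw [abs_mul, abs_of_nonneg (hp a)]
    _ ≤ ∑ a, R * p a := sum_le_sum fun a _ => mul_le_mul_of_nonneg_right (hf a) (hp a)
    _ = R := by rw [← mul_sum, hp1, mul_one]

section ProductWeights

variable {X ι : Type*} [Fintype X] [Fintype ι] [DecidableEq ι] {ρ : X → ℝ}

lemma sum_prod_eq_one (hρs : ∑ x, ρ x = 1) : ∑ xb : ι → X, ∏ i, ρ (xb i) = 1 := by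
  rw [← Fintype.prod_sum]
  simp [hρs]

lemma sum_apply_mul_prod (hρs : ∑ x, ρ x = 1) (f : X → ℝ) (i : ι) :
    ∑ xb : ι → X, f (xb i) * ∏ j, ρ (xb j) = ∑ x, f x * ρ x := by
  have key := Fintype.prod_sum (fun j x => (if j = i then f x else 1) * ρ x)
  have hl : ∀ j, ∑ x, (if j = i then f x else 1) * ρ x = if j = i then ∑ x, f x * ρ x else 1 := by
    intro j
    split_ifs <;> simp [hρs]
  simp only [hl, prod_mul_distrib, prod_ite_eq', mem_univ, if_true] at key
  exact key.symm

lemma sum_sum_apply_mul_prod (hρs : ∑ x, ρ x = 1) (ψ : ι → X → ℝ) (s : Finset ι) :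
    ∑ xb : ι → X, (∑ i ∈ s, ψ i (xb i)) * ∏ j, ρ (xb j) = ∑ i ∈ s, ∑ x, ψ i x * ρ x := by
  simp_rw [sum_mul]
  rw [sum_comm]
  exact sum_congr rfl fun i _ => sum_apply_mul_prod hρs (ψ i) i

end ProductWeights

section DualObjective

variable {X ι : Type*} [Fintype X] [Fintype ι] [DecidableEq ι] {ρ : X → ℝ}
  {c : (ι → X) → ℝ} {η : ℝ}

noncomputable def dualObjective (ρ : X → ℝ) (c : (ι → X) → ℝ) (η : ℝ) (ψ : ι → X → ℝ) : ℝ :=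
  (∑ i, ∑ x, ψ i x * ρ x)
    - η * ∑ xb : ι → X, exp (((∑ i, ψ i (xb i)) - c xb) / η) * ∏ i, ρ (xb i)

lemma continuous_dualObjective : Continuous (dualObjective ρ c η) := by
  unfold dualObjective
  fun_prop

lemma dualObjective_eq_sum (hρs : ∑ x, ρ x = 1) (ψ : ι → X → ℝ) :
    dualObjective ρ c η ψ
      = ∑ xb : ι → X, (∏ i, ρ (xb i)) * dualIntegrand η (c xb) (∑ i, ψ i (xb i)) := by
  rw [dualObjective, ← sum_sum_apply_mul_prod hρs ψ univ, mul_sum, ← sum_sub_distrib]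
  refine sum_congr rfl fun xb _ => ?_
  rw [dualIntegrand]
  ring

lemma dualObjective_congr (hρs : ∑ x, ρ x = 1) {ψ φ : ι → X → ℝ}
    (h : ∀ xb : ι → X, ∑ i, ψ i (xb i) = ∑ i, φ i (xb i)) :
    dualObjective ρ c η ψ = dualObjective ρ c η φ := by
  simp only [dualObjective_eq_sum hρs, h]

lemma exists_dualObjective_eq_and_sum_mul_eq_zero (hρs : ∑ x, ρ x = 1) (i₀ : ι)
    (ψ : ι → X → ℝ) : ∃ φ : ι → X → ℝ, dualObjective ρ c η φ = dualObjective ρ c η ψ ∧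
      ∀ i ≠ i₀, ∑ x, φ i x * ρ x = 0 := by
  set e : ι → ℝ := fun i => ∑ x, ψ i x * ρ x
  refine ⟨fun i x => ψ i x - e i + if i = i₀ then ∑ j, e j else 0,
    dualObjective_congr hρs fun xb => ?_, fun i hi => ?_⟩
  · simp [sum_add_distrib, sum_sub_distrib]
  · simp [hi, sub_mul, sum_sub_distrib, ← mul_sum, hρs, e]

lemma concaveOn_dualObjective (hρ : ∀ x, 0 ≤ ρ x) (hρs : ∑ x, ρ x = 1) (hη : 0 ≤ η) :
    ConcaveOn ℝ Set.univ (dualObjective ρ c η) := by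
  refine ⟨convex_univ, fun ψ _ φ _ a b ha hb hab => ?_⟩
  simp only [dualObjective_eq_sum hρs, smul_eq_mul, mul_sum, ← sum_add_distrib]
  refine sum_le_sum fun xb _ => ?_
  have hsum : ∑ i, (a • ψ + b • φ) i (xb i) = a • ∑ i, ψ i (xb i) + b • ∑ i, φ i (xb i) := by
    simp [sum_add_distrib, mul_sum]
  have := (concaveOn_dualIntegrand hη (c xb)).2 (Set.mem_univ (∑ i, ψ i (xb i)))
    (Set.mem_univ (∑ i, φ i (xb i))) ha hb hab
  rw [hsum]
  simp only [smul_eq_mul] at this ⊢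
  nlinarith [prod_nonneg fun i (_ : i ∈ univ) => hρ (xb i)]

lemma dualObjective_comp_perm (hρs : ∑ x, ρ x = 1) {σ : Perm ι}
    (hc : ∀ xb, c (xb ∘ σ) = c xb) (φ : ι → X → ℝ) :
    dualObjective ρ c η (fun i => φ (σ i)) = dualObjective ρ c η φ := by
  simp only [dualObjective_eq_sum hρs]
  refine Fintype.sum_equiv (σ.arrowCongr (Equiv.refl X)) _ _ fun xb => ?_
  have hxb : σ.arrowCongr (Equiv.refl X) xb ∘ σ = xb := by ext; simp
  simp only [← hc (σ.arrowCongr (Equiv.refl X) xb), hxb]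
  congr 1
  · exact (σ.symm.prod_comp fun i => ρ (xb i)).symm
  · congr 1
    simpa using (σ.symm.sum_comp fun i => φ (σ i) (xb i)).symm

lemma sum_update_mul_prod (hρs : ∑ x, ρ x = 1) (ψ : ι → X → ℝ) (i : ι) (x : X) :
    ∑ xb : ι → X, (∑ j, ψ j (Function.update xb i x j)) * ∏ j, ρ (xb j)
      = ψ i x + ∑ j ∈ univ.erase i, ∑ y, ψ j y * ρ y := by
  have hsplit : ∀ xb : ι → X,
      ∑ j, ψ j (Function.update xb i x j) = ψ i x + ∑ j ∈ univ.erase i, ψ j (xb j) := by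
    intro xb
    rw [← add_sum_erase _ _ (mem_univ i), Function.update_self]
    congr 1
    exact sum_congr rfl fun j hj => by rw [Function.update_of_ne (ne_of_mem_erase hj)]
  simp_rw [hsplit, add_mul, sum_add_distrib, ← mul_sum, sum_prod_eq_one hρs, mul_one,
    sum_sum_apply_mul_prod hρs]

lemma exists_abs_sum_apply_le (hρ : ∀ x, 0 < ρ x) (hρs : ∑ x, ρ x = 1) (hη : 0 < η) (g : ℝ) :
    ∃ R, ∀ ψ : ι → X → ℝ, g ≤ dualObjective ρ c η ψ → ∀ xb : ι → X, |∑ i, ψ i (xb i)| ≤ R := by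
  set p : (ι → X) → ℝ := fun xb => ∏ i, ρ (xb i)
  have hp : ∀ xb, 0 < p xb := fun xb => prod_pos fun i _ => hρ (xb i)
  set C := ∑ xb, p xb * (c xb - η) - g
  set L : (ι → X) → ℝ := fun xb => c xb - η - C / p xb
  refine ⟨∑ xb, max |L xb| |2 * c xb - L xb|, fun ψ hψ xb => ?_⟩
  set h : (ι → X) → ℝ := fun yb => dualIntegrand η (c yb) (∑ i, ψ i (yb i))
  -- each gap `c - η - h` is nonnegative, and they add up to at most `C`
  have hgap : p xb * (c xb - η - h xb) ≤ C := by
    have hsum : ∑ yb, p yb * (c yb - η - h yb)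
        = ∑ yb, p yb * (c yb - η) - dualObjective ρ c η ψ := by
      rw [dualObjective_eq_sum hρs, ← sum_sub_distrib]
      exact sum_congr rfl fun yb _ => by ring
    calc p xb * (c xb - η - h xb) ≤ ∑ yb, p yb * (c yb - η - h yb) :=
          single_le_sum (f := fun yb => p yb * (c yb - η - h yb)) (fun yb _ => mul_nonneg (hp yb).le
            (by linarith [dualIntegrand_le hη (c yb) (∑ i, ψ i (yb i))])) (mem_univ xb)
      _ ≤ C := by linarith
  have hL : L xb ≤ h xb := by
    have := (le_div_iff₀' (hp xb)).2 hgap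
    simp only [L]
    linarith
  obtain ⟨h₁, h₂⟩ := mem_Icc_of_le_dualIntegrand hη hL
  exact (abs_le_max_abs_abs h₁ h₂).trans
    (single_le_sum (f := fun yb => max |L yb| |2 * c yb - L yb|)
      (fun yb _ => (abs_nonneg _).trans (le_max_left _ _)) (mem_univ xb))

lemma abs_apply_le_of_sum_mul_eq_zero (hρ : ∀ x, 0 ≤ ρ x) (hρs : ∑ x, ρ x = 1) {i₀ : ι}
    {ψ : ι → X → ℝ} (hψ₀ : ∀ i ≠ i₀, ∑ x, ψ i x * ρ x = 0) {R : ℝ}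
    (hR : ∀ xb : ι → X, |∑ i, ψ i (xb i)| ≤ R) (i : ι) (x : X) : |ψ i x| ≤ 2 * R := by
  have hmarg : ∀ j y, |ψ j y + ∑ k ∈ univ.erase j, ∑ z, ψ k z * ρ z| ≤ R := fun j y => by
    rw [← sum_update_mul_prod hρs]
    exact abs_sum_mul_le (fun xb => prod_nonneg fun k _ => hρ (xb k)) (sum_prod_eq_one hρs)
      fun xb => hR _
  have h₀ : ∀ y, |ψ i₀ y| ≤ R := fun y => by
    simpa [sum_eq_zero fun j hj => hψ₀ j (ne_of_mem_erase hj)] using hmarg i₀ y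
  have hE := abs_sum_mul_le hρ hρs h₀
  by_cases hi : i = i₀
  · subst hi
    linarith [h₀ x, (abs_nonneg _).trans (h₀ x)]
  · have h := hmarg i x
    rw [sum_eq_single_of_mem i₀ (mem_erase.2 ⟨Ne.symm hi, mem_univ _⟩)
      fun j _ hj => hψ₀ j hj] at h
    obtain ⟨h₁, h₂⟩ := abs_le.1 h
    obtain ⟨h₃, h₄⟩ := abs_le.1 hE
    exact abs_le.2 ⟨by linarith, by linarith⟩

theorem exists_forall_dualObjective_le (hρ : ∀ x, 0 < ρ x) (hρs : ∑ x, ρ x = 1) (hη : 0 < η)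
    (i₀ : ι) : ∃ φ : ι → X → ℝ, ∀ ψ, dualObjective ρ c η ψ ≤ dualObjective ρ c η φ := by
  obtain ⟨R, hR⟩ := exists_abs_sum_apply_le (c := c) hρ hρs hη (dualObjective ρ c η 0)
  set T := {ψ : ι → X → ℝ | (∀ i ≠ i₀, ∑ x, ψ i x * ρ x = 0) ∧
    dualObjective ρ c η 0 ≤ dualObjective ρ c η ψ}
  have hT : IsCompact T := by
    refine (isCompact_Icc (a := fun _ _ => -(2 * R)) (b := fun _ _ => 2 * R)).of_isClosed_subset
      ?_ fun ψ hψ => ?_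
    · simp only [T, Set.ofPred_and, Set.ofPred_forall]
      exact (isClosed_iInter fun i => isClosed_iInter fun _ =>
        isClosed_eq (by fun_prop) continuous_const).inter
        (isClosed_le continuous_const continuous_dualObjective)
    · have h := abs_apply_le_of_sum_mul_eq_zero (fun x => (hρ x).le) hρs hψ.1 (hR ψ hψ.2)
      exact ⟨fun i x => (abs_le.1 (h i x)).1, fun i x => (abs_le.1 (h i x)).2⟩
  obtain ⟨φ, hφT, hφ⟩ := hT.exists_isMaxOn ⟨0, by simp [T]⟩
    continuous_dualObjective.continuousOn
  refine ⟨φ, fun ψ => ?_⟩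
  obtain ⟨ψ', hψ', hψ'₀⟩ := exists_dualObjective_eq_and_sum_mul_eq_zero (c := c) (η := η) hρs i₀ ψ
  rw [← hψ']
  by_cases h : dualObjective ρ c η 0 ≤ dualObjective ρ c η ψ'
  · exact hφ ⟨hψ'₀, h⟩
  · exact (not_le.1 h).le.trans hφT.2

lemma dualObjective_le_sum_smul_comp (hρ : ∀ x, 0 ≤ ρ x) (hρs : ∑ x, ρ x = 1) (hη : 0 ≤ η)
    {κ : Type*} (t : Finset κ) (σ : κ → Perm ι) (hc : ∀ k ∈ t, ∀ xb, c (xb ∘ σ k) = c xb)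
    {a : κ → ℝ} (ha : ∀ k ∈ t, 0 ≤ a k) (ha₁ : ∑ k ∈ t, a k = 1) (φ : ι → X → ℝ) :
    dualObjective ρ c η φ ≤ dualObjective ρ c η (∑ k ∈ t, a k • fun i => φ (σ k i)) := by
  calc dualObjective ρ c η φ = ∑ k ∈ t, a k • dualObjective ρ c η (fun i => φ (σ k i)) := by
        rw [sum_congr rfl fun k hk => by rw [dualObjective_comp_perm hρs (hc k hk)],
          ← sum_smul, ha₁, one_smul]
    _ ≤ _ := (concaveOn_dualObjective hρ hρs hη).le_map_sum ha ha₁ fun _ _ => Set.mem_univ _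

lemma sum_stabilizer_apply_eq {β : Type*} [AddCommMonoid β] {i₀ i j : ι} (hi : i ≠ i₀)
    (hj : j ≠ i₀) (f : ι → β) :
    ∑ σ : MulAction.stabilizer (Perm ι) i₀, f ((σ : Perm ι) i)
      = ∑ σ : MulAction.stabilizer (Perm ι) i₀, f ((σ : Perm ι) j) := by
  have hτ : swap i j ∈ MulAction.stabilizer (Perm ι) i₀ := by
    rw [MulAction.mem_stabilizer_iff, Perm.smul_def, swap_apply_of_ne_of_ne hi.symm hj.symm]
  rw [← Equiv.sum_comp (Equiv.mulRight (⟨swap i j, hτ⟩ : MulAction.stabilizer (Perm ι) i₀))]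
  simp

theorem exists_forall_dualObjective_le_and_eq (hρ : ∀ x, 0 < ρ x)
    (hρs : ∑ x, ρ x = 1) (hη : 0 < η) (i₀ : ι)
    (hc : ∀ σ : Perm ι, σ i₀ = i₀ → ∀ xb, c (xb ∘ σ) = c xb) :
    ∃ φ : ι → X → ℝ, (∀ ψ, dualObjective ρ c η ψ ≤ dualObjective ρ c η φ) ∧
      ∀ i j, i ≠ i₀ → j ≠ i₀ → φ i = φ j := by
  obtain ⟨φ, hφ⟩ := exists_forall_dualObjective_le (c := c) hρ hρs hη i₀
  set Γ := MulAction.stabilizer (Perm ι) i₀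
  set a : Γ → ℝ := fun _ => (Fintype.card Γ : ℝ)⁻¹
  refine ⟨∑ σ : Γ, a σ • fun i => φ ((σ : Perm ι) i), fun ψ => (hφ ψ).trans ?_,
    fun i j hi hj => ?_⟩
  · refine dualObjective_le_sum_smul_comp (fun x => (hρ x).le) hρs hη.le univ
      (fun σ : Γ => (σ : Perm ι)) (fun σ _ => hc σ (MulAction.mem_stabilizer_iff.1 σ.prop))
      (fun _ _ => by positivity) ?_ φ
    simp [a, Fintype.card_ne_zero]
  · simpa only [Finset.sum_apply, Pi.smul_apply] using
      sum_stabilizer_apply_eq hi hj fun k => a 1 • φ k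

end DualObjective

lemma two_mul_sum_filter_lt {ι : Type*} [LinearOrder ι] (s : Finset ι) (f : ι → ι → ℝ)
    (hf : ∀ i j, f i j = f j i) :
    2 * ∑ i ∈ s, ∑ j ∈ s with i < j, f i j = ∑ i ∈ s, ∑ j ∈ s, f i j - ∑ i ∈ s, f i i := by
  have hsplit : ∀ i j, f i j = (if i < j then f i j else 0) + (if j < i then f j i else 0)
      + (if i = j then f i i else 0) := by
    intro i j
    rcases lt_trichotomy i j with h | rfl | h
    · simp [h, h.ne, not_lt_of_gt h]
    · simp
    · simp [h, h.ne', not_lt_of_gt h, hf i j]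
  have hB : ∑ i ∈ s, ∑ j ∈ s, (if j < i then f j i else 0)
      = ∑ i ∈ s, ∑ j ∈ s, (if i < j then f i j else 0) := sum_comm
  have hD : ∑ i ∈ s, ∑ j ∈ s, (if i = j then f i i else 0) = ∑ i ∈ s, f i i :=
    sum_congr rfl fun i hi => by simp [hi]
  have hsum : ∑ i ∈ s, ∑ j ∈ s, f i j
      = 2 * ∑ i ∈ s, ∑ j ∈ s, (if i < j then f i j else 0) + ∑ i ∈ s, f i i := by
    rw [sum_congr rfl fun i _ => sum_congr rfl fun j _ => hsplit i j]
    simp only [sum_add_distrib, hB, hD]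
    ring
  rw [hsum]
  simp only [sum_filter]
  ring

lemma cEps_comp_perm {X : Type*} {m : ℕ} {w : X → X → ℝ} (hw : ∀ x y, w x y = w y x) (ε : ℝ)
    {σ : Perm (Fin (m + 1))} (hσ : σ 0 = 0) (xb : Fin (m + 1) → X) :
    cEps m w ε (xb ∘ σ) = cEps m w ε xb := by
  unfold cEps
  set A := univ.filter fun i : Fin (m + 1) => i ≠ 0
  have hA : ∀ f : Fin (m + 1) → ℝ, ∑ i ∈ A, f (σ i) = ∑ i ∈ A, f i := fun f =>
    σ.sum_comp A f fun a ha => by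
      simp only [A, coe_filter, mem_univ, true_and, Set.mem_ofPred_eq]
      rintro rfl
      exact ha hσ
  -- `i < j` forces `j ≠ 0`, so the pair sum only involves the coordinates in `A`
  have hpair : ∀ yb : Fin (m + 1) → X,
      ∑ i ∈ A, ∑ j ∈ univ.filter (fun j => i < j), w (yb i) (yb j)
        = (∑ i ∈ A, ∑ j ∈ A, w (yb i) (yb j) - ∑ i ∈ A, w (yb i) (yb i)) / 2 := by
    intro yb
    have hlt : ∀ i, univ.filter (fun j => i < j) = A.filter (fun j => i < j) := fun i => by
      rw [filter_filter]
      exact filter_congr fun j _ => ⟨fun h => ⟨((Fin.zero_le i).trans_lt h).ne', h⟩, And.right⟩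
    simp_rw [hlt]
    linarith [two_mul_sum_filter_lt A (fun i j => w (yb i) (yb j)) fun i j => hw _ _]
  rw [hpair, hpair]
  simp only [Function.comp_apply, hσ]
  rw [sum_congr rfl fun i _ => hA fun j => w (xb (σ i)) (xb j),
    hA fun i => ∑ j ∈ A, w (xb i) (xb j), hA fun i => w (xb i) (xb i), hA fun i => w (xb 0) (xb i)]

theorem stmt_19_general {X : Type*} [Fintype X]
    (ρ : X → ℝ) (hρ : ∀ x, 0 < ρ x) (hρs : ∑ x, ρ x = 1)
    (w : X → X → ℝ) (hw : ∀ x y, w x y = w y x)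
    (ε η : ℝ) (hη : 0 < η)
    (m : ℕ) :
    ∃ φ : Fin (m + 1) → X → ℝ,
      (∀ ψ : Fin (m + 1) → X → ℝ,
        ((∑ i, ∑ x, ψ i x * ρ x)
            - η * ∑ xb : Fin (m + 1) → X,
                Real.exp (((∑ i, ψ i (xb i)) - cEps m w ε xb) / η) * ∏ i, ρ (xb i))
          ≤ (∑ i, ∑ x, φ i x * ρ x)
            - η * ∑ xb : Fin (m + 1) → X,
                Real.exp (((∑ i, φ i (xb i)) - cEps m w ε xb) / η) * ∏ i, ρ (xb i))
      ∧ ∀ i j : Fin (m + 1), i ≠ 0 → j ≠ 0 → φ i = φ j :=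
  exists_forall_dualObjective_le_and_eq hρ hρs hη 0 fun _ hσ => cEps_comp_perm hw ε hσ

/-- Symmetry of optimal dual potentials under symmetric data: if all marginals equal `ρ`
and the cost is `c_ε` with `w` symmetric, then there is a maximizer `(φ¹,...,φᵐ)` of the
regularized dual problem with `φ² = φ³ = ... = φᵐ` (there are `m + 1 ≥ 2` marginals). -/
theorem stmt_19 {X : Type*} [Fintype X] [Nonempty X]
    (ρ : X → ℝ) (hρ : ∀ x, 0 < ρ x) (hρs : ∑ x, ρ x = 1)
    (w : X → X → ℝ) (hw : ∀ x y, w x y = w y x)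
    (ε η : ℝ) (hε0 : 0 ≤ ε) (hε1 : ε ≤ 1) (hη : 0 < η)
    (m : ℕ) (hm : 1 ≤ m) :
    ∃ φ : Fin (m + 1) → X → ℝ,
      (∀ ψ : Fin (m + 1) → X → ℝ,
        ((∑ i, ∑ x, ψ i x * ρ x)
            - η * ∑ xb : Fin (m + 1) → X,
                Real.exp (((∑ i, ψ i (xb i)) - cEps m w ε xb) / η) * ∏ i, ρ (xb i))
          ≤ (∑ i, ∑ x, φ i x * ρ x)
            - η * ∑ xb : Fin (m + 1) → X,
                Real.exp (((∑ i, φ i (xb i)) - cEps m w ε xb) / η) * ∏ i, ρ (xb i))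
      ∧ ∀ i j : Fin (m + 1), i ≠ 0 → j ≠ 0 → φ i = φ j :=
  stmt_19_general ρ hρ hρs w hw ε η hη m
end
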